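/- arXiv:1605.08987 — 9 statements merged into one kernel-verified Lean document; each statement's English description precedes it below -/
import Mathlib

section
/- Every compact circular subset of a pseudo-curve coincides with the pseudo-curve: if G ⊆ S¹ is residual, φ : G → I is continuous, PC is the closure in Ω of the graph of φ, and B ⊆ PC is compact with π(B) = S¹, then B = PC. -/
open Set Topology Filter

/-- The graph of `φ` over `G`. -/
def graphOn (G : Set UnitAddCircle) (φ : UnitAddCircle → ℝ) : Set (UnitAddCircle × ℝ) :=
  (fun θ => (θ, φ θ)) '' G

/-- Over a point of `G`, the fiber of the closure of the graph is a single point. -/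
lemma fiber_eq (G : Set UnitAddCircle) (φ : UnitAddCircle → ℝ) (hφc : ContinuousOn φ G)
    {θ : UnitAddCircle} (hθ : θ ∈ G) {y : ℝ}
    (h : (θ, y) ∈ closure (graphOn G φ)) : y = φ θ := by
  set F := 𝓝 (θ, y) ⊓ Filter.principal (graphOn G φ) with hFdef
  have hF : F.NeBot := (mem_closure_iff_clusterPt.mp h : ClusterPt _ _)
  have hgr : graphOn G φ ∈ F := Filter.mem_inf_of_right (Filter.mem_principal_self _)
  have h1 : Filter.Tendsto Prod.snd F (𝓝 y) :=
    (Continuous.tendsto continuous_snd (θ, y)).mono_left inf_le_left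
  have h2 : Filter.Tendsto Prod.fst F (𝓝[G] θ) := by
    rw [tendsto_nhdsWithin_iff]
    refine ⟨(Continuous.tendsto continuous_fst (θ, y)).mono_left inf_le_left, ?_⟩
    filter_upwards [hgr] with p hp
    obtain ⟨g, hg, rfl⟩ := hp
    exact hg
  have h3 : Filter.Tendsto (fun p : UnitAddCircle × ℝ => φ p.1) F (𝓝 (φ θ)) :=
    Filter.Tendsto.comp (hφc θ hθ) h2
  have h4 : Filter.Tendsto Prod.snd F (𝓝 (φ θ)) := by
    refine h3.congr' ?_
    filter_upwards [hgr] with p hp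
    obtain ⟨g, hg, rfl⟩ := hp
    rfl
  exact tendsto_nhds_unique h1 h4

/-- Every compact circular subset of a pseudo-curve coincides with
the pseudo-curve. -/
theorem statement3 (a b : ℝ) (hab : a ≤ b)
    (G : Set UnitAddCircle) (hG : G ∈ residual UnitAddCircle)
    (φ : UnitAddCircle → ℝ) (hφc : ContinuousOn φ G) (hφI : ∀ θ ∈ G, φ θ ∈ Icc a b)
    (B : Set (UnitAddCircle × ℝ)) (hBsub : B ⊆ closure (graphOn G φ))
    (hBcomp : IsCompact B) (hBcirc : Prod.fst '' B = univ) :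
    B = closure (graphOn G φ) := by
  have hgraph : graphOn G φ ⊆ B := by
    rintro _ ⟨θ, hθ, rfl⟩
    have : θ ∈ Prod.fst '' B := by rw [hBcirc]; trivial
    obtain ⟨p, hpB, hp1⟩ := this
    have hy : p.2 = φ θ := by
      have := hBsub hpB
      rw [← hp1]
      exact fiber_eq G φ hφc (hp1 ▸ hθ) (by rwa [← Prod.mk.eta (p := p)] at this)
    have : p = (θ, φ θ) := Prod.ext hp1 hy
    show (θ, φ θ) ∈ B
    exact this ▸ hpB
  exact le_antisymm hBsub (closure_minimal hgraph hBcomp.isClosed)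
end

section
/- If a pseudo-curve contains a curve then it is a curve: if G ⊆ S¹ is residual, φ : G → I is continuous, PC is the closure in Ω of the graph of φ, and there is a continuous map ψ : S¹ → I whose graph is contained in PC, then PC equals the graph of ψ. -/
/-!
Since `φ` is continuous on `G`, the only point of the closure of its graph above `θ ∈ G` is
`(θ, φ θ)`; as `(θ, ψ θ)` lies in that closure, `φ = ψ` on `G`. Hence the graph of `φ` lies in
the graph of `ψ`, which is closed, and so does its closure.
-/

open Set

section Graph

variable {X Y : Type*} [TopologicalSpace X] [TopologicalSpace Y] [T2Space Y]

theorem isClosed_range_graph {f : X → Y} (hf : Continuous f) :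
    IsClosed (range fun x => (x, f x)) := by
  convert isClosed_eq continuous_snd (hf.comp continuous_fst) using 1
  ext ⟨x, y⟩
  simp [eq_comm]

open Filter Topology in
theorem ContinuousWithinAt.eq_of_mem_closure_image_graph {f : X → Y} {s : Set X} {x : X} {y : Y}
    (hf : ContinuousWithinAt f s x) (hxy : (x, y) ∈ closure ((fun z => (z, f z)) '' s)) :
    f x = y := by
  set l := 𝓝 (x, y) ⊓ 𝓟 ((fun z => (z, f z)) '' s)
  have : l.NeBot := mem_closure_iff_clusterPt.mp hxy
  have hfst : Tendsto Prod.fst l (𝓝[s] x) := by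
    refine tendsto_inf.mpr ⟨(continuous_fst.tendsto _).mono_left inf_le_left, ?_⟩
    refine tendsto_principal.mpr (mem_inf_of_right ?_)
    rintro _ ⟨z, hz, rfl⟩
    exact hz
  have hsnd_eq : Prod.snd =ᶠ[l] fun p => f p.1 := by
    refine mem_inf_of_right ?_
    rintro _ ⟨z, -, rfl⟩
    rfl
  have hto_fx : Tendsto Prod.snd l (𝓝 (f x)) := (hf.tendsto.comp hfst).congr' hsnd_eq.symm
  have hto_y : Tendsto Prod.snd l (𝓝 y) := (continuous_snd.tendsto _).mono_left inf_le_left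
  exact tendsto_nhds_unique hto_fx hto_y

end Graph

theorem statement5_general
    (G : Set UnitAddCircle)
    (φ : UnitAddCircle → ℝ) (hφc : ContinuousOn φ G)
    (ψ : UnitAddCircle → ℝ) (hψc : Continuous ψ)
    (hgr : (Set.range fun θ => (θ, ψ θ)) ⊆ closure (graphOn G φ)) :
    closure (graphOn G φ) = Set.range fun θ => (θ, ψ θ) := by
  have hφψ : EqOn φ ψ G := fun θ hθ =>
    (hφc θ hθ).eq_of_mem_closure_image_graph (hgr ⟨θ, rfl⟩)
  have hsub : graphOn G φ ⊆ range fun θ => (θ, ψ θ) := by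
    rintro _ ⟨θ, hθ, rfl⟩
    exact ⟨θ, congrArg (θ, ·) (hφψ hθ).symm⟩
  exact (closure_minimal hsub (isClosed_range_graph hψc)).antisymm hgr

/-- If a pseudo-curve contains a curve (the graph of a continuous map
`ψ : S¹ → I`) then it equals that curve. -/
theorem statement5 (a b : ℝ) (hab : a ≤ b)
    (G : Set UnitAddCircle) (hG : G ∈ residual UnitAddCircle)
    (φ : UnitAddCircle → ℝ) (hφc : ContinuousOn φ G) (hφI : ∀ θ ∈ G, φ θ ∈ Icc a b)
    (ψ : UnitAddCircle → ℝ) (hψc : Continuous ψ) (hψI : ∀ θ, ψ θ ∈ Icc a b)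
    (hgr : (Set.range fun θ => (θ, ψ θ)) ⊆ closure (graphOn G φ)) :
    closure (graphOn G φ) = Set.range fun θ => (θ, ψ θ) :=
  statement5_general G φ hφc ψ hψc hgr
end

section
/- Let F(θ,x) = (θ + ω, f(θ,x)) be a quasiperiodic skew product of Ω = S¹ × I with ω irrational, and let PC be a pseudo-curve with F(PC) ⊆ PC. Then PC is strongly F-invariant, F(PC) = PC, and PC is minimal: every nonempty closed set B ⊆ PC with F(B) ⊆ B equals PC. -/
/-!
Over a point `θ ∈ G` the pseudo-curve has the single point `(θ, φ θ)`, by continuity of `φ` on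
`G`. A nonempty compact invariant subset `B` of the pseudo-curve projects onto a closed set that
is forward-invariant under the irrational rotation, hence onto the whole circle; so `B` contains
the graph of `φ` over `G`, and with it the pseudo-curve. Strong invariance follows by applying
minimality to the compact invariant set `F(PC)`.
-/

open Set

/-- The quasiperiodic skew product `F(θ,x) = (θ + ω, f θ x)`. -/
noncomputable def skewProd (ω : ℝ) (f : UnitAddCircle → ℝ → ℝ) :
    UnitAddCircle × ℝ → UnitAddCircle × ℝ :=
  fun p => (p.1 + (ω : UnitAddCircle), f p.1 p.2)

open Filter Topology

theorem eq_univ_of_isClosed_of_add_mem {G : Type*} [AddGroup G] [TopologicalSpace G]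
    [CompactSpace G] [IsTopologicalAddGroup G] {x : G} (hx : DenseRange (· • x : ℤ → G))
    {K : Set G} (hK : IsClosed K) (hne : K.Nonempty) (hadd : ∀ y ∈ K, y + x ∈ K) :
    K = univ := by
  obtain ⟨k, hk⟩ := hne
  have horbit : ∀ n : ℕ, k + n • x ∈ K := by
    intro n
    induction n with
    | zero => simpa using hk
    | succ n ih => simpa [succ_nsmul, add_assoc] using hadd _ ih
  have hdense : DenseRange (fun n : ℕ => k + n • x) :=
    (Equiv.addLeft k).surjective.denseRange.comp (denseRange_zsmul_iff_nsmul.1 hx)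
      (continuous_const_add k)
  exact univ_subset_iff.1 <| hdense.closure_range ▸ closure_minimal (range_subset_iff.2 horbit) hK

theorem denseRange_zsmul_coe_unitAddCircle {ω : ℝ} (hω : Irrational ω) :
    DenseRange (· • (ω : UnitAddCircle) : ℤ → UnitAddCircle) :=
  AddCircle.denseRange_zsmul_coe_iff.2 (by rwa [div_one])

theorem fst_image_eq_univ_of_skewProd_image_subset {ω : ℝ} (hω : Irrational ω)
    {f : UnitAddCircle → ℝ → ℝ} {B : Set (UnitAddCircle × ℝ)} (hB : IsCompact B)
    (hne : B.Nonempty) (hinv : skewProd ω f '' B ⊆ B) : Prod.fst '' B = univ := by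
  refine eq_univ_of_isClosed_of_add_mem (denseRange_zsmul_coe_unitAddCircle hω)
    (hB.image continuous_fst).isClosed (hne.image _) ?_
  rintro _ ⟨p, hp, rfl⟩
  exact ⟨skewProd ω f p, hinv (mem_image_of_mem _ hp), rfl⟩

theorem eq_of_mem_closure_graphOn {G : Set UnitAddCircle} {φ : UnitAddCircle → ℝ}
    {θ : UnitAddCircle} (hφ : ContinuousWithinAt φ G θ) {x : ℝ}
    (hx : (θ, x) ∈ closure (graphOn G φ)) : x = φ θ := by
  have : (𝓝[graphOn G φ] (θ, x)).NeBot := mem_closure_iff_nhdsWithin_neBot.1 hx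
  have hfst : Tendsto Prod.fst (𝓝[graphOn G φ] (θ, x)) (𝓝[G] θ) :=
    tendsto_nhdsWithin_iff.2 ⟨continuous_fst.continuousWithinAt.tendsto,
      eventually_nhdsWithin_of_forall fun _ ⟨_, ht, hp⟩ => hp ▸ ht⟩
  have hsnd : φ ∘ Prod.fst =ᶠ[𝓝[graphOn G φ] (θ, x)] Prod.snd :=
    eventually_nhdsWithin_of_forall fun _ ⟨_, _, hp⟩ => hp ▸ rfl
  exact tendsto_nhds_unique continuous_snd.continuousWithinAt.tendsto
    ((hφ.tendsto.comp hfst).congr' hsnd)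

theorem graphOn_subset_of_fst_image_eq_univ {G : Set UnitAddCircle} {φ : UnitAddCircle → ℝ}
    (hφ : ContinuousOn φ G) {B : Set (UnitAddCircle × ℝ)} (hB : B ⊆ closure (graphOn G φ))
    (hfst : Prod.fst '' B = univ) : graphOn G φ ⊆ B := by
  rintro _ ⟨θ, hθ, rfl⟩
  obtain ⟨⟨θ', x⟩, hp, hθ' : θ' = θ⟩ := hfst.symm ▸ mem_univ θ
  subst hθ'
  show (θ', φ θ') ∈ B
  rwa [← eq_of_mem_closure_graphOn (hφ θ' hθ) (hB hp)]

theorem closure_graphOn_subset_univ_prod {a b : ℝ} {G : Set UnitAddCircle}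
    {φ : UnitAddCircle → ℝ} (hφI : ∀ θ ∈ G, φ θ ∈ Icc a b) :
    closure (graphOn G φ) ⊆ univ ×ˢ Icc a b :=
  closure_minimal (by rintro _ ⟨θ, hθ, rfl⟩; exact ⟨trivial, hφI θ hθ⟩)
    (isClosed_univ.prod isClosed_Icc)

theorem isCompact_closure_graphOn {a b : ℝ} {G : Set UnitAddCircle} {φ : UnitAddCircle → ℝ}
    (hφI : ∀ θ ∈ G, φ θ ∈ Icc a b) : IsCompact (closure (graphOn G φ)) :=
  (isCompact_univ.prod isCompact_Icc).of_isClosed_subset isClosed_closure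
    (closure_graphOn_subset_univ_prod hφI)

theorem statement6_general (a b : ℝ) (ω : ℝ) (hω : Irrational ω)
    (f : UnitAddCircle → ℝ → ℝ)
    (hf : ContinuousOn (fun p : UnitAddCircle × ℝ => f p.1 p.2) (univ ×ˢ Icc a b))
    (G : Set UnitAddCircle)
    (φ : UnitAddCircle → ℝ) (hφc : ContinuousOn φ G) (hφI : ∀ θ ∈ G, φ θ ∈ Icc a b)
    (hinv : skewProd ω f '' closure (graphOn G φ) ⊆ closure (graphOn G φ)) :
    skewProd ω f '' closure (graphOn G φ) = closure (graphOn G φ) ∧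
    ∀ B ⊆ closure (graphOn G φ), B.Nonempty → IsClosed B →
      skewProd ω f '' B ⊆ B → B = closure (graphOn G φ) := by
  set PC := closure (graphOn G φ)
  have hPC : IsCompact PC := isCompact_closure_graphOn hφI
  have hmin : ∀ B ⊆ PC, B.Nonempty → IsClosed B → skewProd ω f '' B ⊆ B → B = PC := by
    intro B hBPC hne hB hBinv
    have hfst := fst_image_eq_univ_of_skewProd_image_subset hω
      (hPC.of_isClosed_subset hB hBPC) hne hBinv
    exact hBPC.antisymm (closure_minimal (graphOn_subset_of_fst_image_eq_univ hφc hBPC hfst) hB)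
  refine ⟨?_, hmin⟩
  rcases PC.eq_empty_or_nonempty with hempty | hne
  · rw [hempty, image_empty]
  have hF : ContinuousOn (skewProd ω f) PC :=
    ((continuous_fst.add continuous_const).continuousOn.prodMk hf).mono
      (closure_graphOn_subset_univ_prod hφI)
  exact hmin _ hinv (hne.image _) (hPC.image_of_continuousOn hF).isClosed (image_mono hinv)

/-- If a pseudo-curve `PC` is invariant (`F(PC) ⊆ PC`) under a
quasiperiodic skew product `F`, then it is strongly invariant (`F(PC) = PC`) and
minimal: every nonempty closed `F`-invariant subset of `PC` equals `PC`. -/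
theorem statement6 (a b : ℝ) (hab : a ≤ b) (ω : ℝ) (hω : Irrational ω)
    (f : UnitAddCircle → ℝ → ℝ)
    (hf : ContinuousOn (fun p : UnitAddCircle × ℝ => f p.1 p.2) (univ ×ˢ Icc a b))
    (hmaps : ∀ θ, ∀ x ∈ Icc a b, f θ x ∈ Icc a b)
    (G : Set UnitAddCircle) (hG : G ∈ residual UnitAddCircle)
    (φ : UnitAddCircle → ℝ) (hφc : ContinuousOn φ G) (hφI : ∀ θ ∈ G, φ θ ∈ Icc a b)
    (hinv : skewProd ω f '' closure (graphOn G φ) ⊆ closure (graphOn G φ)) :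
    skewProd ω f '' closure (graphOn G φ) = closure (graphOn G φ) ∧
    ∀ B ⊆ closure (graphOn G φ), B.Nonempty → IsClosed B →
      skewProd ω f '' B ⊆ B → B = closure (graphOn G φ) :=
  statement6_general a b ω hω f hf G φ hφc hφI hinv
end

section
/- Let F(θ,x) = (θ + ω, f(θ,x)) be a quasiperiodic skew product of Ω = S¹ × I with ω irrational, and let PC be a pseudo-curve with F(PC) ⊆ PC. If PC contains an arc of a curve, that is, there exist a nonempty open arc U ⊆ S¹ and a continuous map ξ : U → I whose graph is contained in PC, then PC is a curve: PC is the graph of a continuous map S¹ → I. -/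
open Set

/-!
Over a point of `G`, where `φ` is continuous, the fibre of `PC = closure (graph φ)` is the
single point `φ θ`. Consequently, if `PC` contains the graph of a continuous `η` over an open
arc `V`, then `φ = η` on `G ∩ V` and the fibres of `PC` over `V` are exactly the points of the
graph of `η`. Invariance under `F` carries such an arc over `V` to one over `V + ω`, and the
translates `U + nω`, `n ∈ ℕ`, cover the circle because the forward orbit of an irrational
rotation is dense. So `PC` is locally, hence globally, the graph of a continuous map.
-/

open Filter Topology

theorem preimage_fst_inter_graphOn {X Y : Type*} (f : X → Y) (s V : Set X) :
    Prod.fst ⁻¹' V ∩ s.graphOn f = (s ∩ V).graphOn f := by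
  ext ⟨x, y⟩
  simp only [mem_inter_iff, mem_preimage, mem_graphOn]
  tauto

section Graph

variable {X Y : Type*} [TopologicalSpace X] [TopologicalSpace Y]

theorem eq_of_mem_closure_graphOn_s7 [T2Space Y] {φ : X → Y} {s : Set X} {a : X} {y : Y}
    (hφ : ContinuousWithinAt φ s a) (h : (a, y) ∈ closure (s.graphOn φ)) : y = φ a := by
  by_contra hne
  obtain ⟨u, v, hu, hv, hyu, hφv, huv⟩ := t2_separation hne
  obtain ⟨w, hw, haw, hwv⟩ := mem_nhdsWithin.mp (hφ (hv.mem_nhds hφv))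
  obtain ⟨_, ⟨hxw, hxu⟩, x, hxs, rfl⟩ :=
    mem_closure_iff.mp h (w ×ˢ u) (hw.prod hu) ⟨haw, hyu⟩
  exact huv.le_bot ⟨hxu, hwv ⟨hxw, hxs⟩⟩

theorem mem_closure_graphOn_iff_of_graphOn_subset [T2Space Y] {φ η : X → Y} {G V : Set X}
    (hφ : ContinuousOn φ G) (hV : IsOpen V) (hη : ContinuousOn η V)
    (hsub : V.graphOn η ⊆ closure (G.graphOn φ)) {x : X} (hx : x ∈ V) (y : Y) :
    (x, y) ∈ closure (G.graphOn φ) ↔ y = η x := by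
  refine ⟨fun h => ?_, fun h => h ▸ hsub ⟨x, hx, rfl⟩⟩
  have hφη : EqOn φ η (G ∩ V) := fun z hz =>
    (eq_of_mem_closure_graphOn_s7 (hφ z hz.1) (hsub ⟨z, hz.2, rfl⟩)).symm
  have hGV : (x, y) ∈ closure ((G ∩ V).graphOn η) := by
    rw [← graphOn_inj.mpr hφη, ← preimage_fst_inter_graphOn]
    exact (hV.preimage continuous_fst).inter_closure ⟨hx, h⟩
  exact eq_of_mem_closure_graphOn_s7 (hη x hx) (closure_mono (image_mono inter_subset_right) hGV)

theorem exists_continuous_eq_range_of_locally_graph {P : Set (X × Y)}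
    (h : ∀ a, ∃ V ∈ 𝓝 a, ∃ η : X → Y, ContinuousOn η V ∧ ∀ x ∈ V, ∀ y, (x, y) ∈ P ↔ y = η x) :
    ∃ ψ : X → Y, Continuous ψ ∧ P = range fun x => (x, ψ x) := by
  choose V hV η hη hP using h
  have hψ : ∀ x y, (x, y) ∈ P ↔ y = η x x := fun x => hP x x (mem_of_mem_nhds (hV x))
  refine ⟨fun x => η x x, continuous_iff_continuousAt.mpr fun a => ?_, ?_⟩
  · have hloc : η a =ᶠ[𝓝 a] fun x => η x x :=
      eventually_of_mem (hV a) fun x hx => ((hP a x hx _).mp ((hψ x _).mpr rfl)).symm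
    exact ((hη a).continuousAt (hV a)).congr hloc
  · ext ⟨x, y⟩
    simp only [hψ, mem_range, Prod.mk.injEq]
    exact ⟨fun h => ⟨x, rfl, h.symm⟩, fun ⟨_, hx, hy⟩ => hx ▸ hy.symm⟩

end Graph

theorem DenseRange.exists_sub_nsmul_mem {A : Type*} [TopologicalSpace A] [AddCommGroup A]
    [ContinuousSub A] {c : A} (hc : DenseRange fun n : ℕ => n • c) {U : Set A} (hU : IsOpen U)
    (hUne : U.Nonempty) (θ : A) : ∃ n : ℕ, θ - n • c ∈ U := by
  obtain ⟨u, hu⟩ := hUne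
  exact hc.exists_mem_open (hU.preimage (continuous_const.sub continuous_id))
    ⟨θ - u, by simpa using hu⟩

theorem denseRange_nsmul_of_irrational {ω : ℝ} (hω : Irrational ω) :
    DenseRange fun n : ℕ => n • (ω : UnitAddCircle) :=
  denseRange_zsmul_iff_nsmul.mp (AddCircle.denseRange_zsmul_coe_iff.mpr (by simpa using hω))

def ContainsContinuousGraphOn {X Y : Type*} [TopologicalSpace X] [TopologicalSpace Y]
    (P : Set (X × Y)) (V : Set X) : Prop :=
  ∃ η : X → Y, ContinuousOn η V ∧ V.graphOn η ⊆ P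

namespace ContainsContinuousGraphOn

variable {ω : ℝ} {f : UnitAddCircle → ℝ → ℝ} {S P : Set (UnitAddCircle × ℝ)}

theorem preimage_sub (hf : ContinuousOn (fun p : UnitAddCircle × ℝ => f p.1 p.2) S)
    (hPS : P ⊆ S) (hinv : skewProd ω f '' P ⊆ P) {V : Set UnitAddCircle}
    (hV : ContainsContinuousGraphOn P V) :
    ContainsContinuousGraphOn P ((· - (ω : UnitAddCircle)) ⁻¹' V) := by
  obtain ⟨η, hηc, hηP⟩ := hV
  have hback : ∀ θ ∈ (· - (ω : UnitAddCircle)) ⁻¹' V, (θ - ω, η (θ - ω)) ∈ P :=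
    fun θ hθ => hηP ⟨_, hθ, rfl⟩
  refine ⟨fun θ => f (θ - ω) (η (θ - ω)), ?_, ?_⟩
  · have hshift : ContinuousOn (· - (ω : UnitAddCircle)) ((· - (ω : UnitAddCircle)) ⁻¹' V) :=
      (continuous_sub_right _).continuousOn
    exact hf.comp (hshift.prodMk (hηc.comp hshift fun _ hθ => hθ)) fun θ hθ => hPS (hback θ hθ)
  · rintro _ ⟨θ, hθ, rfl⟩
    simpa [skewProd] using hinv ⟨_, hback θ hθ, rfl⟩

theorem preimage_sub_nsmul (hf : ContinuousOn (fun p : UnitAddCircle × ℝ => f p.1 p.2) S)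
    (hPS : P ⊆ S) (hinv : skewProd ω f '' P ⊆ P) {V : Set UnitAddCircle}
    (hV : ContainsContinuousGraphOn P V) (n : ℕ) :
    ContainsContinuousGraphOn P ((· - n • (ω : UnitAddCircle)) ⁻¹' V) := by
  induction n with
  | zero => simpa using hV
  | succ n ih =>
    have hsucc : (· - (n + 1) • (ω : UnitAddCircle)) ⁻¹' V =
        (· - (ω : UnitAddCircle)) ⁻¹' ((· - n • (ω : UnitAddCircle)) ⁻¹' V) := by
      ext θ
      simp only [mem_preimage, succ_nsmul, sub_add_eq_sub_sub_swap]
    rw [hsucc]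
    exact ih.preimage_sub hf hPS hinv

end ContainsContinuousGraphOn

theorem statement7_general (a b : ℝ) (ω : ℝ) (hω : Irrational ω)
    (f : UnitAddCircle → ℝ → ℝ)
    (hf : ContinuousOn (fun p : UnitAddCircle × ℝ => f p.1 p.2) (univ ×ˢ Icc a b))
    (G : Set UnitAddCircle)
    (φ : UnitAddCircle → ℝ) (hφc : ContinuousOn φ G) (hφI : ∀ θ ∈ G, φ θ ∈ Icc a b)
    (hinv : skewProd ω f '' closure (graphOn G φ) ⊆ closure (graphOn G φ))
    (harc : ∃ (U : Set UnitAddCircle) (ξ : UnitAddCircle → ℝ),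
      IsOpen U ∧ U.Nonempty ∧ IsPreconnected U ∧ ContinuousOn ξ U ∧
      (∀ θ ∈ U, ξ θ ∈ Icc a b) ∧ graphOn U ξ ⊆ closure (graphOn G φ)) :
    ∃ ψ : UnitAddCircle → ℝ, Continuous ψ ∧ (∀ θ, ψ θ ∈ Icc a b) ∧
      closure (graphOn G φ) = Set.range fun θ => (θ, ψ θ) := by
  obtain ⟨U, ξ, hUo, hUne, -, hξc, -, hξPC⟩ := harc
  have hband : closure (G.graphOn φ) ⊆ univ ×ˢ Icc a b :=
    closure_minimal (by rintro _ ⟨θ, hθ, rfl⟩; exact ⟨trivial, hφI θ hθ⟩)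
      (isClosed_univ.prod isClosed_Icc)
  have hU : ContainsContinuousGraphOn (closure (G.graphOn φ)) U := ⟨ξ, hξc, hξPC⟩
  obtain ⟨ψ, hψc, hPC⟩ := exists_continuous_eq_range_of_locally_graph fun θ => by
    obtain ⟨n, hn⟩ := (denseRange_nsmul_of_irrational hω).exists_sub_nsmul_mem hUo hUne θ
    obtain ⟨η, hηc, hηPC⟩ := hU.preimage_sub_nsmul hf hband hinv n
    have hV := hUo.preimage (continuous_sub_right (n • (ω : UnitAddCircle)))
    exact ⟨_, hV.mem_nhds hn, η, hηc, fun x hx =>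
      mem_closure_graphOn_iff_of_graphOn_subset hφc hV hηc hηPC hx⟩
  exact ⟨ψ, hψc, fun θ => (hband (hPC ▸ mem_range_self θ)).2, hPC⟩

/-- If an invariant pseudo-curve of a quasiperiodic skew product
contains an arc of a curve (the graph of a continuous map on a nonempty open arc of
`S¹`), then it is a curve: the graph of a continuous map `S¹ → I`. -/
theorem statement7 (a b : ℝ) (hab : a ≤ b) (ω : ℝ) (hω : Irrational ω)
    (f : UnitAddCircle → ℝ → ℝ)
    (hf : ContinuousOn (fun p : UnitAddCircle × ℝ => f p.1 p.2) (univ ×ˢ Icc a b))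
    (hmaps : ∀ θ, ∀ x ∈ Icc a b, f θ x ∈ Icc a b)
    (G : Set UnitAddCircle) (hG : G ∈ residual UnitAddCircle)
    (φ : UnitAddCircle → ℝ) (hφc : ContinuousOn φ G) (hφI : ∀ θ ∈ G, φ θ ∈ Icc a b)
    (hinv : skewProd ω f '' closure (graphOn G φ) ⊆ closure (graphOn G φ))
    (harc : ∃ (U : Set UnitAddCircle) (ξ : UnitAddCircle → ℝ),
      IsOpen U ∧ U.Nonempty ∧ IsPreconnected U ∧ ContinuousOn ξ U ∧
      (∀ θ ∈ U, ξ θ ∈ Icc a b) ∧ graphOn U ξ ⊆ closure (graphOn G φ)) :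
    ∃ ψ : UnitAddCircle → ℝ, Continuous ψ ∧ (∀ θ, ψ θ ∈ Icc a b) ∧
      closure (graphOn G φ) = Set.range fun θ => (θ, ψ θ) :=
  statement7_general a b ω hω f hf G φ hφc hφI hinv harc
end

section
/- Let (φ, G) and (φ', G') be pseudo-curve generators, with pseudo-curves PC = closure of graph of φ and PC' = closure of graph of φ'. Then PC = PC' if and only if φ(θ) = φ'(θ) for every θ ∈ G ∩ G'; equivalently, d∞((φ,G),(φ',G')) = 0 if and only if the two generators define the same pseudo-curve. -/
/-!
Over a point `θ` where `φ'` is continuous within `G'`, the closure of the graph of `φ'` contains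
only `(θ, φ' θ)`, so equal pseudo-curves force `φ = φ'` on `G ∩ G'`. Conversely, `G ∩ G'` is
dense by Baire, and a function continuous on `G` has the same graph closure over `G` as over any
subset of `G` dense in it, so both pseudo-curves are the closure of the common graph over `G ∩ G'`.
-/

open Set

open Filter Topology

section ClosureGraphOn

variable {X Y : Type*} [TopologicalSpace X] [TopologicalSpace Y]

theorem eq_of_mk_mem_closure_graphOn [T2Space Y] {G : Set X} {φ : X → Y} {θ : X} {y : Y}
    (hφ : ContinuousWithinAt φ G θ) (h : (θ, y) ∈ closure (Set.graphOn φ G)) : y = φ θ := by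
  by_contra hne
  obtain ⟨U, V, hU, hV, hyU, hφV, hUV⟩ := t2_separation hne
  obtain ⟨W, hW, hWV⟩ : ∃ W ∈ 𝓝 θ, ∀ t ∈ W, t ∈ G → φ t ∈ V :=
    (eventually_nhdsWithin_iff.mp (hφ (hV.mem_nhds hφV))).exists_mem
  obtain ⟨_, ⟨htW, htU⟩, t, htG, rfl⟩ :=
    mem_closure_iff_nhds.mp h _ (prod_mem_nhds hW (hU.mem_nhds hyU))
  exact hUV.le_bot ⟨htU, hWV t htW htG⟩

theorem closure_graphOn_eq_of_subset_closure {G H : Set X} {φ : X → Y}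
    (hHG : H ⊆ G) (hGH : G ⊆ closure H) (hφ : ContinuousOn φ G) :
    closure (Set.graphOn φ G) = closure (Set.graphOn φ H) := by
  refine (closure_minimal ?_ isClosed_closure).antisymm (closure_mono (image_mono hHG))
  rintro _ ⟨θ, hθ, rfl⟩
  exact ((continuousWithinAt_id.prodMk (hφ θ hθ)).mono hHG).mem_closure_image (hGH hθ)

end ClosureGraphOn

theorem statement9_general
    (G G' : Set UnitAddCircle)
    (hG : G ∈ residual UnitAddCircle) (hG' : G' ∈ residual UnitAddCircle)
    (φ φ' : UnitAddCircle → ℝ)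
    (hφc : ContinuousOn φ G) (hφ'c : ContinuousOn φ' G') :
    closure (graphOn G φ) = closure (graphOn G' φ') ↔ ∀ θ ∈ G ∩ G', φ θ = φ' θ := by
  constructor
  · intro h θ hθ
    have hmem : (θ, φ θ) ∈ closure (graphOn G' φ') := h ▸ subset_closure ⟨θ, hθ.1, rfl⟩
    exact eq_of_mk_mem_closure_graphOn (hφ'c θ hθ.2) hmem
  · intro h
    have hdense : closure (G ∩ G') = univ :=
      (dense_of_mem_residual (inter_mem hG hG')).closure_eq
    have hG_eq : closure (graphOn G φ) = closure (graphOn (G ∩ G') φ) :=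
      closure_graphOn_eq_of_subset_closure inter_subset_left (hdense ▸ subset_univ G) hφc
    have hG'_eq : closure (graphOn G' φ') = closure (graphOn (G ∩ G') φ') :=
      closure_graphOn_eq_of_subset_closure inter_subset_right (hdense ▸ subset_univ G') hφ'c
    rw [hG_eq, hG'_eq]
    exact congrArg closure (Set.graphOn_inj.mpr h)

/-- Two pseudo-curve generators define the same pseudo-curve if and
only if their generating functions agree on `G ∩ G'` (equivalently, their supremum
pseudo-distance vanishes). -/
theorem statement9 (a b : ℝ) (hab : a ≤ b)
    (G G' : Set UnitAddCircle)
    (hG : G ∈ residual UnitAddCircle) (hG' : G' ∈ residual UnitAddCircle)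
    (φ φ' : UnitAddCircle → ℝ)
    (hφc : ContinuousOn φ G) (hφ'c : ContinuousOn φ' G')
    (hφI : ∀ θ ∈ G, φ θ ∈ Icc a b) (hφ'I : ∀ θ ∈ G', φ' θ ∈ Icc a b) :
    closure (graphOn G φ) = closure (graphOn G' φ') ↔ ∀ θ ∈ G ∩ G', φ θ = φ' θ :=
  statement9_general G G' hG hG' φ φ' hφc hφ'c
end

section
/- The space of pseudo-curves with the Hausdorff metric is not complete. Concretely, parametrizing S¹ = ℝ/ℤ by [0,1), for n ≥ 2 let ξ_n : S¹ → I be the continuous map with ξ_n(θ) = 2nθ for θ ∈ [0, 1/(2n)], ξ_n(θ) = 2(1 − nθ) for θ ∈ [1/(2n), 1/n], and ξ_n(θ) = 0 for θ ∈ [1/n, 1). Then the graphs Γ_n of ξ_n satisfy H(Γ_n, Γ_m) ≤ 1/min(n,m) for all n, m ≥ 2 (so they form a Cauchy sequence in the Hausdorff metric), Γ_n converges in the Hausdorff metric to L = (S¹ × {0}) ∪ ({0} × [0,1]), and L is not a pseudo-curve: there is no residual set G ⊆ S¹ and continuous map φ : G → I with L equal to the closure of the graph of φ. -/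
/-!
Over `[1/n, 1)` the graph `Γ_n` of the tent map `ξ_n` lies on the zero level, and over `[0, 1/n]`
it climbs to height `1` and back. Hence a point `(x, s)` with `s ∈ [0, 1]` is within `r ≥ 1/n` of
`Γ_n` as soon as `x ≤ r` (use `(s/(2n), s) ∈ Γ_n`) or `s = 0` (use `(x, 0)` or `(0, 0)`). Every
point of `Γ_m` and of `L` is of this form for `r = 1/min(n,m)`, resp. `r = 1/n`, and every point of
`Γ_n` is either on the zero level or within `1/n` of `(0, s) ∈ L`.

`L` is not a pseudo-curve: a graph has at most one point over `0`, and the rest of a graph inside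
`L` lies on the zero level, so its closure meets the segment `{0} × [0,1]` in at most two points.
-/

open Set Metric Filter

noncomputable def tent (n x : ℝ) : ℝ :=
  if x ≤ 1 / (2 * n) then 2 * n * x
  else if x ≤ 1 / n then 2 * (1 - n * x) else 0

section Tent

variable {n x : ℝ}

lemma tent_mem_Icc (hn : 0 < n) (hx : 0 ≤ x) : tent n x ∈ Icc 0 1 := by
  unfold tent
  split_ifs with h₁ h₂
  · have := (le_div_iff₀ (by positivity)).mp h₁
    constructor <;> nlinarith
  · have := (div_lt_iff₀ (by positivity)).mp (lt_of_not_ge h₁)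
    have := (le_div_iff₀ hn).mp h₂
    constructor <;> nlinarith
  · simp

lemma tent_eq_zero_of_one_div_le (hn : 0 < n) (hx : 1 / n ≤ x) : tent n x = 0 := by
  have : 1 / (2 * n) < 1 / n := one_div_lt_one_div_of_lt hn (by linarith)
  unfold tent
  split_ifs with h₁ h₂
  · linarith
  · rw [le_antisymm h₂ hx]
    field_simp
    norm_num
  · rfl

lemma le_or_tent_eq_zero (hn : 0 < n) (x : ℝ) : x ≤ 1 / n ∨ tent n x = 0 :=
  (le_or_gt x (1 / n)).imp_right fun h => tent_eq_zero_of_one_div_le hn h.le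

lemma tent_div_two_mul {t : ℝ} (hn : 0 < n) (ht : t ∈ Icc 0 1) : tent n (t / (2 * n)) = t := by
  have : t / (2 * n) ≤ 1 / (2 * n) := by gcongr; exact ht.2
  rw [tent, if_pos this]
  field_simp

lemma exists_tent_eq {s r : ℝ} (hn : 1 ≤ n) (hx : x ∈ Ico 0 1) (hs : s ∈ Icc 0 1)
    (hr : 1 / n ≤ r) (h : x ≤ r ∨ s = 0) : ∃ y ∈ Ico (0 : ℝ) 1, |x - y| ≤ r ∧ tent n y = s := by
  have hn₀ : 0 < n := by linarith
  by_cases hxr : x ≤ r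
  · have hy : s / (2 * n) ≤ 1 / (2 * n) := by gcongr; exact hs.2
    have : 1 / (2 * n) ≤ 1 / n := one_div_le_one_div_of_le hn₀ (by linarith)
    have : 1 / (2 * n) ≤ 1 / 2 := one_div_le_one_div_of_le two_pos (by linarith)
    have : 0 ≤ s / (2 * n) := div_nonneg hs.1 (by positivity)
    refine ⟨s / (2 * n), ⟨this, by linarith⟩, ?_, tent_div_two_mul hn₀ hs⟩
    rw [abs_le]
    constructor <;> linarith [hx.1]
  · obtain rfl := h.resolve_left hxr
    exact ⟨x, hx, by simpa using (one_div_pos.mpr hn₀).le.trans hr,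
      tent_eq_zero_of_one_div_le hn₀ (by linarith)⟩

end Tent

lemma dist_coe_prod_le (x y s t : ℝ) :
    dist (((x : UnitAddCircle), s) : UnitAddCircle × ℝ) ((y : UnitAddCircle), t)
      ≤ max |x - y| |s - t| := by
  rw [Prod.dist_eq, Real.dist_eq]
  gcongr
  rw [dist_eq_norm, ← AddCircle.coe_sub]
  simpa using QuotientAddGroup.norm_mk_le_norm (S := AddSubgroup.zmultiples (1 : ℝ)) (m := x - y)

section TentGraph

variable {f g : UnitAddCircle → ℝ} {n m r : ℝ}

lemma exists_mem_graph_dist_le (hn : 1 ≤ n) (hf : ∀ y ∈ Ico (0 : ℝ) 1, f y = tent n y)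
    {x s : ℝ} (hx : x ∈ Ico 0 1) (hs : s ∈ Icc 0 1) (hr : 1 / n ≤ r) (h : x ≤ r ∨ s = 0) :
    ∃ q ∈ range fun θ => (θ, f θ), dist ((x : UnitAddCircle), s) q ≤ r := by
  obtain ⟨y, hy, hxy, hys⟩ := exists_tent_eq hn hx hs hr h
  refine ⟨_, mem_range_self (y : UnitAddCircle), ?_⟩
  rw [hf y hy, hys]
  refine (dist_coe_prod_le x y s s).trans (max_le hxy ?_)
  simpa using (show (0 : ℝ) ≤ 1 / n by positivity).trans hr

lemma exists_coe_eq_of_mem_graph (hf : ∀ y ∈ Ico (0 : ℝ) 1, f y = tent n y)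
    {p : UnitAddCircle × ℝ} (hp : p ∈ range fun θ => (θ, f θ)) :
    ∃ x ∈ Ico (0 : ℝ) 1, p = ((x : UnitAddCircle), tent n x) := by
  obtain ⟨θ, rfl⟩ := hp
  obtain ⟨x, hx, rfl⟩ := AddCircle.eq_coe_Ico θ
  exact ⟨x, hx, by simp only [hf x hx]⟩

lemma exists_mem_graph_dist_le_of_mem_graph (hn : 1 ≤ n) (hm : 1 ≤ m)
    (hf : ∀ y ∈ Ico (0 : ℝ) 1, f y = tent n y) (hg : ∀ y ∈ Ico (0 : ℝ) 1, g y = tent m y)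
    (hnr : 1 / n ≤ r) (hmr : 1 / m ≤ r) {p : UnitAddCircle × ℝ}
    (hp : p ∈ range fun θ => (θ, f θ)) : ∃ q ∈ range fun θ => (θ, g θ), dist p q ≤ r := by
  obtain ⟨x, hx, rfl⟩ := exists_coe_eq_of_mem_graph hf hp
  refine exists_mem_graph_dist_le hm hg hx (tent_mem_Icc (by linarith) hx.1) hmr ?_
  exact (le_or_tent_eq_zero (by linarith) x).imp_left (·.trans hnr)

lemma hausdorffDist_tentGraph_le (hn : 1 ≤ n) (hm : 1 ≤ m)
    (hf : ∀ y ∈ Ico (0 : ℝ) 1, f y = tent n y) (hg : ∀ y ∈ Ico (0 : ℝ) 1, g y = tent m y)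
    (hnr : 1 / n ≤ r) (hmr : 1 / m ≤ r) :
    hausdorffDist (range fun θ => (θ, f θ)) (range fun θ => (θ, g θ)) ≤ r :=
  hausdorffDist_le_of_mem_dist ((show (0 : ℝ) ≤ 1 / n by positivity).trans hnr)
    (fun _ => exists_mem_graph_dist_le_of_mem_graph hn hm hf hg hnr hmr)
    (fun _ => exists_mem_graph_dist_le_of_mem_graph hm hn hg hf hmr hnr)

end TentGraph

def spikedCircle : Set (UnitAddCircle × ℝ) :=
  (univ ×ˢ {0}) ∪ ({((0 : ℝ) : UnitAddCircle)} ×ˢ Icc 0 1)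

lemma hausdorffDist_tentGraph_spikedCircle_le {f : UnitAddCircle → ℝ} {n : ℝ} (hn : 1 ≤ n)
    (hf : ∀ y ∈ Ico (0 : ℝ) 1, f y = tent n y) :
    hausdorffDist (range fun θ => (θ, f θ)) spikedCircle ≤ 1 / n := by
  have hn₀ : 0 < n := by linarith
  refine hausdorffDist_le_of_mem_dist (by positivity) (fun p hp => ?_) ?_
  · obtain ⟨x, hx, rfl⟩ := exists_coe_eq_of_mem_graph hf hp
    rcases le_or_tent_eq_zero hn₀ x with hxn | h0
    · refine ⟨((0 : ℝ), tent n x), Or.inr ⟨rfl, tent_mem_Icc hn₀ hx.1⟩, ?_⟩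
      refine (dist_coe_prod_le x 0 _ _).trans (max_le ?_ (by simp; positivity))
      rwa [sub_zero, abs_of_nonneg hx.1]
    · exact ⟨_, Or.inl ⟨mem_univ _, mem_singleton_iff.mpr h0⟩, by rw [dist_self]; positivity⟩
  · rintro ⟨θ, s⟩ (⟨-, rfl : s = 0⟩ | ⟨rfl : θ = _, hs⟩)
    · obtain ⟨x, hx, rfl⟩ := AddCircle.eq_coe_Ico θ
      exact exists_mem_graph_dist_le hn hf hx (by simp) le_rfl (Or.inr rfl)
    · exact exists_mem_graph_dist_le hn hf (by simp) hs le_rfl (Or.inl (by positivity))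

lemma union_segment_ne_closure_graph {X : Type*} [TopologicalSpace X] [T1Space X] (x₀ : X)
    (G : Set X) (φ : X → ℝ) :
    (univ ×ˢ {0}) ∪ ({x₀} ×ˢ Icc 0 1) ≠ closure ((fun x => (x, φ x)) '' G) := by
  intro hL
  have hsub : closure ((fun x => (x, φ x)) '' G) ⊆ (univ ×ˢ {0}) ∪ {(x₀, φ x₀)} := by
    refine closure_minimal ?_ ((isClosed_univ.prod isClosed_singleton).union isClosed_singleton)
    rintro _ ⟨x, hx, rfl⟩
    rcases hL ▸ subset_closure (mem_image_of_mem _ hx) with h | ⟨rfl : x = x₀, -⟩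
    · exact Or.inl h
    · exact Or.inr rfl
  have height {t : ℝ} (ht : t ∈ Icc (0 : ℝ) 1) (ht₀ : t ≠ 0) : φ x₀ = t := by
    have hmem : (x₀, t) ∈ closure ((fun x => (x, φ x)) '' G) := hL ▸ Or.inr ⟨rfl, ht⟩
    rcases hsub hmem with ⟨-, h⟩ | h
    · exact absurd h ht₀
    · exact (Prod.ext_iff.mp h).2.symm
  have h₁ := height (t := 1) (by norm_num) one_ne_zero
  have h₂ := height (t := 1 / 2) (by norm_num) (by norm_num)
  norm_num [h₁] at h₂

theorem statement13_general (a b : ℝ)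
    (ξ : ℕ → UnitAddCircle → ℝ)
    (hξ : ∀ n : ℕ, 2 ≤ n → ∀ x : ℝ, 0 ≤ x → x < 1 →
      ξ n ((x : ℝ) : UnitAddCircle) =
        if x ≤ 1 / (2 * n) then 2 * n * x
        else if x ≤ 1 / n then 2 * (1 - n * x) else 0) :
    (∀ n m : ℕ, 2 ≤ n → 2 ≤ m →
      hausdorffDist (Set.range fun θ => (θ, ξ n θ)) (Set.range fun θ => (θ, ξ m θ))
        ≤ 1 / ((min n m : ℕ) : ℝ)) ∧
    Tendsto (fun n => hausdorffDist (Set.range fun θ => (θ, ξ n θ))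
        (((univ : Set UnitAddCircle) ×ˢ ({0} : Set ℝ)) ∪
          (({((0:ℝ) : UnitAddCircle)} : Set UnitAddCircle) ×ˢ Icc (0:ℝ) 1)))
      atTop (nhds 0) ∧
    ¬ ∃ (G : Set UnitAddCircle) (φ : UnitAddCircle → ℝ),
        G ∈ residual UnitAddCircle ∧ ContinuousOn φ G ∧ (∀ θ ∈ G, φ θ ∈ Icc a b) ∧
        ((univ : Set UnitAddCircle) ×ˢ ({0} : Set ℝ)) ∪
            (({((0:ℝ) : UnitAddCircle)} : Set UnitAddCircle) ×ˢ Icc (0:ℝ) 1)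
          = closure ((fun θ => (θ, φ θ)) '' G) := by
  have hξ_tent (n : ℕ) (hn : 2 ≤ n) : ∀ y ∈ Ico (0 : ℝ) 1, ξ n y = tent n y :=
    fun y hy => hξ n hn y hy.1 hy.2
  have one_le (n : ℕ) (hn : 2 ≤ n) : (1 : ℝ) ≤ n := by exact_mod_cast one_le_two.trans hn
  refine ⟨fun n m hn hm => ?_, ?_, ?_⟩
  · have hmin : (0 : ℝ) < (min n m : ℕ) := by exact_mod_cast (two_pos.trans_le (le_min hn hm))
    exact hausdorffDist_tentGraph_le (one_le n hn) (one_le m hm) (hξ_tent n hn) (hξ_tent m hm)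
      (one_div_le_one_div_of_le hmin (by exact_mod_cast min_le_left n m))
      (one_div_le_one_div_of_le hmin (by exact_mod_cast min_le_right n m))
  · refine squeeze_zero' (Eventually.of_forall fun n => hausdorffDist_nonneg) ?_
      tendsto_one_div_atTop_nhds_zero_nat
    filter_upwards [eventually_ge_atTop 2] with n hn
    exact hausdorffDist_tentGraph_spikedCircle_le (one_le n hn) (hξ_tent n hn)
  · rintro ⟨G, φ, -, -, -, hL⟩
    exact union_segment_ne_closure_graph _ G φ hL

/-- The space of pseudo-curves with the Hausdorff metric is not
complete: the tent maps `ξ_n` (equal to `2nθ` on `[0, 1/(2n)]`, `2(1 − nθ)` on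
`[1/(2n), 1/n]` and `0` on `[1/n, 1)`) have graphs forming a Cauchy sequence in the
Hausdorff metric (with `H(Γ_n, Γ_m) ≤ 1/min(n,m)`), converging to
`L = (S¹ × {0}) ∪ ({0} × [0,1])`, and `L` is not a pseudo-curve. -/
theorem statement13 (a b : ℝ) (ha : a ≤ 0) (hb : 1 ≤ b)
    (ξ : ℕ → UnitAddCircle → ℝ)
    (hξ : ∀ n : ℕ, 2 ≤ n → ∀ x : ℝ, 0 ≤ x → x < 1 →
      ξ n ((x : ℝ) : UnitAddCircle) =
        if x ≤ 1 / (2 * n) then 2 * n * x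
        else if x ≤ 1 / n then 2 * (1 - n * x) else 0) :
    (∀ n m : ℕ, 2 ≤ n → 2 ≤ m →
      hausdorffDist (Set.range fun θ => (θ, ξ n θ)) (Set.range fun θ => (θ, ξ m θ))
        ≤ 1 / ((min n m : ℕ) : ℝ)) ∧
    Tendsto (fun n => hausdorffDist (Set.range fun θ => (θ, ξ n θ))
        (((univ : Set UnitAddCircle) ×ˢ ({0} : Set ℝ)) ∪
          (({((0:ℝ) : UnitAddCircle)} : Set UnitAddCircle) ×ˢ Icc (0:ℝ) 1)))
      atTop (nhds 0) ∧
    ¬ ∃ (G : Set UnitAddCircle) (φ : UnitAddCircle → ℝ),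
        G ∈ residual UnitAddCircle ∧ ContinuousOn φ G ∧ (∀ θ ∈ G, φ θ ∈ Icc a b) ∧
        ((univ : Set UnitAddCircle) ×ˢ ({0} : Set ℝ)) ∪
            (({((0:ℝ) : UnitAddCircle)} : Set UnitAddCircle) ×ˢ Icc (0:ℝ) 1)
          = closure ((fun θ => (θ, φ θ)) '' G) :=
  statement13_general a b ξ hξ
end

section
/- For every irrational ω ∈ [0,1] there exist a residual set G ⊆ S¹, namely G = S¹ \ {nω mod 1 : n ∈ ℤ}, and a continuous map γ : G → [-1,1], such that the set A = closure in Ω of the graph of γ satisfies: A is connected; A contains no arc of a curve (there is no nonempty open arc U ⊆ S¹ and continuous map ξ : U → [-2,2] whose graph is contained in A); and Ω \ A has exactly two connected components. -/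
open Set

/-- The orbit `{nω mod 1 : n ∈ ℤ}` of `0` under the rotation by `ω` on the circle. -/
def rotOrbit (ω : ℝ) : Set UnitAddCircle :=
  Set.range fun n : ℤ => ((n * ω : ℝ) : UnitAddCircle)

namespace S14


noncomputable def pp (ω : ℝ) (n : ℤ) : UnitAddCircle := ((n * ω : ℝ) : UnitAddCircle)

noncomputable def w (n : ℤ) : ℝ := (2⁻¹ : ℝ) ^ n.natAbs / 8

lemma w_pos (n : ℤ) : 0 < w n := by unfold w; positivity

lemma w_coe (n : ℕ) : w n = (2⁻¹:ℝ)^n / 8 := by simp [w]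

lemma w_neg (n : ℕ) : w (-(n+1)) = (2⁻¹:ℝ) * (2⁻¹:ℝ)^n / 8 := by
  have : ((-(n+1) : ℤ).natAbs) = n + 1 := by omega
  rw [w, this, pow_succ]; ring

lemma sum_nat : Summable (fun n : ℕ => w n) ∧ ∑' n : ℕ, w (n:ℤ) = (1/4:ℝ) := by
  have hs : Summable (fun n : ℕ => (2⁻¹:ℝ)^n / 8) :=
    (summable_geometric_of_lt_one (by norm_num) (by norm_num : (2⁻¹:ℝ) < 1)).div_const 8
  constructor
  · exact hs.congr (fun n => (w_coe n).symm)
  · rw [tsum_congr w_coe, tsum_div_const, tsum_geometric_of_lt_one (by norm_num) (by norm_num)]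
    norm_num

lemma sum_neg : Summable (fun n : ℕ => w (-(n+1))) ∧ ∑' n : ℕ, w (-(n+1)) = (1/8:ℝ) := by
  have hs : Summable (fun n : ℕ => (2⁻¹:ℝ) * (2⁻¹:ℝ)^n / 8) :=
    (((summable_geometric_of_lt_one (by norm_num) (by norm_num : (2⁻¹:ℝ) < 1))).mul_left _).div_const 8
  constructor
  · exact hs.congr (fun n => (w_neg n).symm)
  · rw [tsum_congr w_neg, tsum_div_const, tsum_mul_left,
      tsum_geometric_of_lt_one (by norm_num) (by norm_num)]
    norm_num

lemma summable_w : Summable w := Summable.of_nat_of_neg_add_one sum_nat.1 sum_neg.1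

lemma tsum_w_le : ∑' n : ℤ, w n ≤ 1/2 := by
  rw [tsum_of_nat_of_neg_add_one sum_nat.1 sum_neg.1, sum_nat.2, sum_neg.2]; norm_num

lemma pp_injective {ω : ℝ} (hω : Irrational ω) : Function.Injective (pp ω) := by
  intro n m h
  by_contra hnm
  unfold pp at h
  have : ((n * ω : ℝ) : UnitAddCircle) - ((m * ω : ℝ) : UnitAddCircle) = 0 := by rw [h]; simp
  rw [← AddCircle.coe_sub, AddCircle.coe_eq_zero_iff] at this
  obtain ⟨k, hk⟩ := this
  have hd : (n - m : ℝ) ≠ 0 := by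
    have : (n : ℝ) ≠ m := by exact_mod_cast fun hh => hnm (by exact_mod_cast hh)
    intro hz; apply this; linarith
  apply hω
  refine ⟨(k : ℚ) / ((n : ℚ) - m), ?_⟩
  have hk' : (k : ℝ) = n * ω - m * ω := by simpa using hk
  push_cast
  rw [div_eq_iff (by exact_mod_cast hd)]
  linarith [hk']

noncomputable def f (ω : ℝ) (n : ℤ) (θ : UnitAddCircle) : ℝ :=
  w n * Real.sin (‖θ - pp ω n‖⁻¹)

noncomputable def gam (ω : ℝ) (θ : UnitAddCircle) : ℝ := ∑' n : ℤ, f ω n θ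

noncomputable def rr (ω : ℝ) (n : ℤ) (θ : UnitAddCircle) : ℝ :=
  ∑' m : ℤ, if m = n then 0 else f ω m θ

lemma f_bound (ω : ℝ) (n : ℤ) (θ : UnitAddCircle) : |f ω n θ| ≤ w n := by
  rw [f, abs_mul, abs_of_pos (w_pos n)]
  calc w n * |Real.sin _| ≤ w n * 1 :=
        mul_le_mul_of_nonneg_left (Real.abs_sin_le_one _) (w_pos n).le
    _ = w n := mul_one _

lemma summable_f (ω : ℝ) (θ : UnitAddCircle) : Summable (fun n => f ω n θ) :=
  Summable.of_abs (summable_w.of_nonneg_of_le (fun n => abs_nonneg _) (fun n => f_bound ω n θ))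

lemma f_continuousOn (ω : ℝ) (n : ℤ) : ContinuousOn (f ω n) {θ | θ ≠ pp ω n} := by
  apply ContinuousOn.mul continuousOn_const
  apply Real.continuous_sin.comp_continuousOn
  apply ContinuousOn.inv₀
  · exact ((continuous_id.sub continuous_const).norm).continuousOn
  · intro θ hθ
    simp only [ne_eq, norm_eq_zero, sub_eq_zero]
    exact hθ

lemma gam_split (ω : ℝ) (n : ℤ) (θ : UnitAddCircle) : gam ω θ = f ω n θ + rr ω n θ :=
  Summable.tsum_eq_add_tsum_ite (summable_f ω θ) n

lemma summable_ite_w (n : ℤ) : Summable (fun m : ℤ => if m = n then 0 else w m) :=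
  summable_w.of_nonneg_of_le
    (fun m => by split <;> [rfl; exact (w_pos m).le])
    (fun m => by split <;> [exact (w_pos m).le; rfl])

lemma tsum_ite_w (n : ℤ) : ∑' m : ℤ, (if m = n then 0 else w m) = (∑' m : ℤ, w m) - w n := by
  have := Summable.tsum_eq_add_tsum_ite summable_w n
  linarith

lemma abs_tsum_le {g : ℤ → ℝ} (h : Summable (fun m => |g m|)) :
    |∑' m, g m| ≤ ∑' m, |g m| := by
  have h2 : Summable (fun m => ‖g m‖) := by simpa [Real.norm_eq_abs] using h
  have := norm_tsum_le_tsum_norm h2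
  simpa [Real.norm_eq_abs] using this

lemma rr_bound (ω : ℝ) (n : ℤ) (θ : UnitAddCircle) : |rr ω n θ| ≤ 1/2 - w n := by
  have hb : ∀ m : ℤ, |if m = n then 0 else f ω m θ| ≤ if m = n then 0 else w m := by
    intro m; split
    · simp
    · exact f_bound ω m θ
  have habs : Summable (fun m : ℤ => |if m = n then 0 else f ω m θ|) :=
    (summable_ite_w n).of_nonneg_of_le (fun m => abs_nonneg _) hb
  calc |rr ω n θ| ≤ ∑' m : ℤ, |if m = n then 0 else f ω m θ| := abs_tsum_le habs
    _ ≤ ∑' m : ℤ, (if m = n then 0 else w m) := Summable.tsum_le_tsum hb habs (summable_ite_w n)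
    _ = (∑' m : ℤ, w m) - w n := tsum_ite_w n
    _ ≤ 1/2 - w n := by linarith [tsum_w_le]

lemma gam_bound (ω : ℝ) (θ : UnitAddCircle) : |gam ω θ| ≤ 1/2 := by
  have habs : Summable (fun n : ℤ => |f ω n θ|) :=
    summable_w.of_nonneg_of_le (fun m => abs_nonneg _) (fun m => f_bound ω m θ)
  calc |gam ω θ| ≤ ∑' n : ℤ, |f ω n θ| := abs_tsum_le habs
    _ ≤ ∑' n : ℤ, w n := Summable.tsum_le_tsum (fun n => f_bound ω n θ) habs summable_w
    _ ≤ 1/2 := tsum_w_le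

lemma gam_continuousOn (ω : ℝ) : ContinuousOn (gam ω) (Set.range (pp ω))ᶜ := by
  apply continuousOn_tsum (u := w) _ summable_w
  · intro n θ hθ
    rw [Real.norm_eq_abs]; exact f_bound ω n θ
  · intro n
    exact (f_continuousOn ω n).mono (fun θ hθ => by
      simp only [mem_setOf_eq]
      exact fun h => hθ ⟨n, h.symm⟩)

noncomputable def sn (ω : ℝ) (n : ℤ) : Set UnitAddCircle := {θ | ∀ m : ℤ, m ≠ n → θ ≠ pp ω m}

lemma rr_continuousOn (ω : ℝ) (n : ℤ) : ContinuousOn (rr ω n) (sn ω n) := by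
  apply continuousOn_tsum (u := fun m => if m = n then 0 else w m) _ (summable_ite_w n)
  · intro m θ hθ
    rw [Real.norm_eq_abs]
    split
    · simp
    · exact f_bound ω m θ
  · intro m
    by_cases hm : m = n
    · simp only [hm, if_pos]
      simpa using continuousOn_const
    · simp only [if_neg hm]
      exact (f_continuousOn ω m).mono (fun θ hθ => hθ m hm)

lemma rotOrbit_eq (ω : ℝ) : rotOrbit ω = Set.range (pp ω) := rfl

lemma exists_ne_zero : ∃ x : UnitAddCircle, x ≠ 0 := by
  refine ⟨((1/2 : ℝ) : UnitAddCircle), ?_⟩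
  rw [ne_eq, AddCircle.coe_eq_zero_iff]
  rintro ⟨n, hn⟩
  rw [zsmul_eq_mul, mul_one] at hn
  have : (2 : ℝ) * n = 1 := by rw [hn]; ring
  have : (2 * n : ℤ) = (1 : ℤ) := by exact_mod_cast this
  omega

lemma dense_compl_singleton' (x : UnitAddCircle) : Dense ({x}ᶜ : Set UnitAddCircle) := by
  rw [dense_iff_inter_open]
  intro U hU hUne
  by_contra h
  rw [not_nonempty_iff_eq_empty] at h
  have hUx : U = {x} := by
    apply Subset.antisymm
    · intro y hy
      by_contra hyx
      exact absurd (⟨y, hy, hyx⟩ : (U ∩ {x}ᶜ).Nonempty) (by rw [h]; exact not_nonempty_empty)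
    · obtain ⟨y, hy⟩ := hUne
      have : y = x := by
        by_contra hyx
        exact absurd (⟨y, hy, hyx⟩ : (U ∩ {x}ᶜ).Nonempty) (by rw [h]; exact not_nonempty_empty)
      subst this
      exact singleton_subset_iff.mpr hy
  have hclopen : IsClopen ({x} : Set UnitAddCircle) := ⟨isClosed_singleton, hUx ▸ hU⟩
  rcases isClopen_iff.mp hclopen with h1 | h1
  · exact absurd h1 (singleton_ne_empty x)
  · obtain ⟨y, hy⟩ := exists_ne_zero
    have h0 : (0 : UnitAddCircle) ∈ ({x} : Set UnitAddCircle) := h1 ▸ mem_univ _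
    have hy' : y ∈ ({x} : Set UnitAddCircle) := h1 ▸ mem_univ _
    exact hy (by rw [mem_singleton_iff] at h0 hy'; rw [hy', ← h0])

lemma residual_G (ω : ℝ) : (rotOrbit ω)ᶜ ∈ residual UnitAddCircle := by
  have : (rotOrbit ω)ᶜ = ⋂ n : ℤ, ({pp ω n}ᶜ : Set UnitAddCircle) := by
    rw [rotOrbit_eq]
    ext θ; simp [pp, eq_comm]
  rw [this]
  rw [countable_iInter_mem]
  intro n
  exact residual_of_dense_open isOpen_compl_singleton (dense_compl_singleton' _)

lemma dense_G (ω : ℝ) : Dense ((rotOrbit ω)ᶜ : Set UnitAddCircle) :=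
  dense_of_mem_residual (residual_G ω)

lemma dense_orbit {ω : ℝ} (hω : Irrational ω) : Dense (rotOrbit ω) := by
  -- the subgroup {a + b ω} is dense in ℝ
  let S : AddSubgroup ℝ :=
    { carrier := {x | ∃ a b : ℤ, x = a + b * ω}
      zero_mem' := ⟨0, 0, by simp⟩
      add_mem' := by
        rintro x y ⟨a, b, rfl⟩ ⟨c, d, rfl⟩
        exact ⟨a + c, b + d, by push_cast; ring⟩
      neg_mem' := by
        rintro x ⟨a, b, rfl⟩
        exact ⟨-a, -b, by push_cast; ring⟩ }
  have hdense : Dense (S : Set ℝ) := by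
    rcases S.dense_or_cyclic with h | ⟨a, ha⟩
    · exact h
    · exfalso
      have h1 : (1 : ℝ) ∈ S := ⟨1, 0, by norm_num⟩
      have hw : ω ∈ S := ⟨0, 1, by norm_num⟩
      rw [ha, AddSubgroup.mem_closure_singleton] at h1 hw
      obtain ⟨j, hj⟩ := h1
      obtain ⟨l, hl⟩ := hw
      rw [zsmul_eq_mul] at hj hl
      have hj0 : (j : ℝ) ≠ 0 := by
        intro h0; rw [h0, zero_mul] at hj; norm_num at hj
      apply hω
      refine ⟨(l : ℚ) / (j : ℚ), ?_⟩
      push_cast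
      rw [div_eq_iff (by exact_mod_cast hj0)]
      have : a = 1 / (j : ℝ) := by field_simp at hj ⊢; linarith
      rw [this] at hl
      field_simp at hl ⊢
      linarith
  -- push to the circle
  rw [dense_iff_inter_open]
  intro U hU hUne
  have hpre : IsOpen ((fun t : ℝ => (t : UnitAddCircle)) ⁻¹' U) :=
    (AddCircle.continuous_mk' 1).isOpen_preimage U hU
  have hprene : ((fun t : ℝ => (t : UnitAddCircle)) ⁻¹' U).Nonempty := by
    obtain ⟨z, hz⟩ := hUne
    obtain ⟨x, hx⟩ := QuotientAddGroup.mk_surjective z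
    exact ⟨x, by simp only [mem_preimage]; rw [show ((x:ℝ):UnitAddCircle) = z from hx]; exact hz⟩
  obtain ⟨y, hyU, hyS⟩ := (dense_iff_inter_open.mp hdense) _ hpre hprene
  obtain ⟨a, b, hab⟩ := hyS
  have hza : ((a : ℝ) : UnitAddCircle) = 0 := by
    rw [AddCircle.coe_eq_zero_iff]; exact ⟨a, by simp⟩
  have hcoe : ((y:ℝ):UnitAddCircle) = ((b * ω : ℝ) : UnitAddCircle) := by
    rw [hab, AddCircle.coe_add, hza, zero_add]
  exact ⟨(y : UnitAddCircle), hyU, ⟨b, hcoe.symm⟩⟩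

noncomputable def A (ω : ℝ) : Set (UnitAddCircle × ℝ) :=
  closure (graphOn (rotOrbit ω)ᶜ (gam ω))

lemma G_sub_sn (ω : ℝ) (n : ℤ) : (rotOrbit ω)ᶜ ⊆ sn ω n := by
  intro θ hθ m _ hm
  exact hθ (by rw [rotOrbit_eq]; exact ⟨m, hm.symm⟩)

lemma pp_mem_sn {ω : ℝ} (hω : Irrational ω) (n : ℤ) : pp ω n ∈ sn ω n :=
  fun m hm h => hm (pp_injective hω h).symm

lemma mem_G_iff {ω : ℝ} {θ : UnitAddCircle} :
    θ ∈ (rotOrbit ω)ᶜ ↔ ∀ n : ℤ, θ ≠ pp ω n := by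
  rw [rotOrbit_eq]
  constructor
  · intro h n hn; exact h ⟨n, hn.symm⟩
  · rintro h ⟨n, hn⟩; exact h n hn.symm

/-- helper : limit extraction from closure membership -/
lemma exists_seq_of_mem_A {ω : ℝ} {z : UnitAddCircle × ℝ} (hz : z ∈ A ω) :
    ∃ θ : ℕ → UnitAddCircle, (∀ k, θ k ∈ (rotOrbit ω)ᶜ) ∧
      Filter.Tendsto θ Filter.atTop (nhds z.1) ∧
      Filter.Tendsto (fun k => gam ω (θ k)) Filter.atTop (nhds z.2) := by
  obtain ⟨x, hx, hlim⟩ := mem_closure_iff_seq_limit.mp hz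
  have hx' : ∀ k, (x k).1 ∈ (rotOrbit ω)ᶜ ∧ (x k).2 = gam ω ((x k).1) := by
    intro k
    obtain ⟨θ', hθ', he⟩ := hx k
    rw [← he]
    exact ⟨hθ', rfl⟩
  refine ⟨fun k => (x k).1, fun k => (hx' k).1, ?_, ?_⟩
  · exact (continuous_fst.tendsto z).comp hlim
  · have h2 : Filter.Tendsto (fun k => (x k).2) Filter.atTop (nhds z.2) :=
      (continuous_snd.tendsto z).comp hlim
    exact h2.congr (fun k => (hx' k).2)

lemma tendsto_within_G {ω : ℝ} {θ : ℕ → UnitAddCircle} {a : UnitAddCircle}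
    (hθ : ∀ k, θ k ∈ (rotOrbit ω)ᶜ) (hlim : Filter.Tendsto θ Filter.atTop (nhds a)) :
    Filter.Tendsto θ Filter.atTop (nhdsWithin a (rotOrbit ω)ᶜ) :=
  tendsto_nhdsWithin_iff.mpr ⟨hlim, Filter.Eventually.of_forall hθ⟩

lemma fiber_G {ω : ℝ} {θ : UnitAddCircle} (hθ : θ ∈ (rotOrbit ω)ᶜ) (y : ℝ) :
    (θ, y) ∈ A ω ↔ y = gam ω θ := by
  constructor
  · intro hy
    obtain ⟨θs, hθs, hlim1, hlim2⟩ := exists_seq_of_mem_A hy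
    have hcw : ContinuousWithinAt (gam ω) (rotOrbit ω)ᶜ θ := by
      have := gam_continuousOn ω
      rw [← rotOrbit_eq] at this
      exact this θ hθ
    have : Filter.Tendsto (fun k => gam ω (θs k)) Filter.atTop (nhds (gam ω θ)) :=
      hcw.tendsto.comp (tendsto_within_G hθs hlim1)
    exact tendsto_nhds_unique hlim2 this
  · rintro rfl
    exact subset_closure ⟨θ, hθ, rfl⟩

lemma fiber_pp_subset {ω : ℝ} (hω : Irrational ω) (n : ℤ) {y : ℝ}
    (hy : (pp ω n, y) ∈ A ω) :
    y ∈ Icc (rr ω n (pp ω n) - w n) (rr ω n (pp ω n) + w n) := by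
  obtain ⟨θs, hθs, hlim1, hlim2⟩ := exists_seq_of_mem_A hy
  have hcw : ContinuousWithinAt (rr ω n) (sn ω n) (pp ω n) :=
    rr_continuousOn ω n _ (pp_mem_sn hω n)
  have hrr : Filter.Tendsto (fun k => rr ω n (θs k)) Filter.atTop
      (nhds (rr ω n (pp ω n))) := by
    apply hcw.tendsto.comp
    exact tendsto_nhdsWithin_iff.mpr ⟨hlim1, Filter.Eventually.of_forall
      (fun k => G_sub_sn ω n (hθs k))⟩
  have hdiff : Filter.Tendsto (fun k => gam ω (θs k) - rr ω n (θs k)) Filter.atTop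
      (nhds (y - rr ω n (pp ω n))) := hlim2.sub hrr
  constructor
  · have : ∀ k, -(w n) ≤ gam ω (θs k) - rr ω n (θs k) := by
      intro k
      have h1 := gam_split ω n (θs k)
      have h2 := abs_le.mp (f_bound ω n (θs k))
      linarith [h2.1]
    have := le_of_tendsto_of_tendsto' tendsto_const_nhds hdiff this
    linarith
  · have : ∀ k, gam ω (θs k) - rr ω n (θs k) ≤ w n := by
      intro k
      have h1 := gam_split ω n (θs k)
      have h2 := abs_le.mp (f_bound ω n (θs k))
      linarith [h2.2]
    have := le_of_tendsto_of_tendsto' hdiff tendsto_const_nhds this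
    linarith

/-- Key approximation: near `pp ω n` the function `gam` nearly attains every
value in the segment. -/
lemma approx {ω : ℝ} (hω : Irrational ω) (n : ℤ) {t : ℝ} (ht : t ∈ Icc (-1:ℝ) 1)
    {ε : ℝ} (hε : 0 < ε) :
    ∃ θ, θ ∈ (rotOrbit ω)ᶜ ∧ ‖θ - pp ω n‖ < ε ∧
      |gam ω θ - (rr ω n (pp ω n) + w n * t)| < ε := by
  have hwn := w_pos n
  -- continuity of rr at pp n
  have hcw : ContinuousWithinAt (rr ω n) (sn ω n) (pp ω n) :=
    rr_continuousOn ω n _ (pp_mem_sn hω n)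
  rw [Metric.continuousWithinAt_iff] at hcw
  obtain ⟨δ, hδ, hδ'⟩ := hcw (ε/2) (by linarith)
  -- choose the winding number
  obtain ⟨k, hk⟩ := exists_nat_gt (δ⁻¹ + ε⁻¹ + 2 + Real.pi)
  set s0 := Real.arcsin t + 2 * Real.pi * (k + 1) with hs0
  have hπ := Real.pi_gt_three
  have harc1 := Real.neg_pi_div_two_le_arcsin t
  have harc2 := Real.arcsin_le_pi_div_two t
  have hδpos : 0 < δ⁻¹ := by positivity
  have hεpos : 0 < ε⁻¹ := by positivity
  have hs0big : δ⁻¹ + ε⁻¹ + 2 < s0 := by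
    have hk0 : (0:ℝ) ≤ (k:ℝ) := Nat.cast_nonneg k
    have h1 : 2 * Real.pi * ((k:ℝ) + 1) ≥ 2 * ((k:ℝ) + 1) := by nlinarith
    nlinarith
  have hs0pos : 0 < s0 := by linarith
  set ρ0 := s0⁻¹ with hρ0
  have hρ0pos : 0 < ρ0 := by positivity
  have hρ0δ : ρ0 < δ := by
    rw [hρ0]
    have : δ⁻¹ < s0 := by linarith
    calc s0⁻¹ < (δ⁻¹)⁻¹ := by apply inv_strictAnti₀ hδpos this
      _ = δ := inv_inv δ
  have hρ0ε : ρ0 < ε := by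
    rw [hρ0]
    have : ε⁻¹ < s0 := by linarith
    calc s0⁻¹ < (ε⁻¹)⁻¹ := by apply inv_strictAnti₀ hεpos this
      _ = ε := inv_inv ε
  have hρ0half : ρ0 ≤ 1/2 := by
    rw [hρ0]
    have h2 : (2:ℝ) < s0 := by linarith
    calc s0⁻¹ ≤ (2:ℝ)⁻¹ := by
          apply inv_anti₀ (by norm_num) h2.le
      _ = 1/2 := by norm_num
  have hsin : Real.sin ρ0⁻¹ = t := by
    rw [hρ0, inv_inv, hs0]
    have : Real.arcsin t + 2 * Real.pi * ((k:ℕ) + 1)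
        = Real.arcsin t + ((k:ℤ) + 1) * (2 * Real.pi) := by push_cast; ring
    rw [this]
    rw [show ((k:ℤ) + 1) * (2 * Real.pi) = (((k+1 : ℤ)):ℝ) * (2*Real.pi) by push_cast; ring]
    rw [Real.sin_add_int_mul_two_pi]
    exact Real.sin_arcsin ht.1 ht.2
  -- continuity of ρ ↦ sin ρ⁻¹ at ρ0
  have hgg : ContinuousAt (fun ρ : ℝ => Real.sin ρ⁻¹) ρ0 :=
    Real.continuous_sin.continuousAt.comp (continuousAt_inv₀ hρ0pos.ne')
  rw [Metric.continuousAt_iff] at hgg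
  have hquot : 0 < ε/(2 * w n) := div_pos hε (by linarith)
  obtain ⟨δ₂, hδ₂, hδ₂'⟩ := hgg (ε/(2 * w n)) hquot
  set δ' := min δ₂ (min (δ - ρ0) (ε - ρ0)) with hδ'def
  have hδ'pos : 0 < δ' := by
    apply lt_min hδ₂
    apply lt_min <;> linarith
  -- the open set of suitable angles
  set V : Set UnitAddCircle := (fun θ => ‖θ - pp ω n‖) ⁻¹' Metric.ball ρ0 δ' with hV
  have hVopen : IsOpen V :=
    ((continuous_id.sub continuous_const).norm).isOpen_preimage _ Metric.isOpen_ball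
  have hVne : V.Nonempty := by
    refine ⟨pp ω n + ((ρ0 : ℝ) : UnitAddCircle), ?_⟩
    simp only [hV, mem_preimage, add_sub_cancel_left]
    have hnorm : ‖((ρ0 : ℝ) : UnitAddCircle)‖ = |ρ0| := by
      rw [AddCircle.norm_coe_eq_abs_iff _ (by norm_num : (1:ℝ) ≠ 0)]
      rw [abs_of_pos hρ0pos, abs_one]
      linarith
    rw [hnorm, abs_of_pos hρ0pos]
    simpa using hδ'pos
  obtain ⟨θ, hθG, hθV⟩ := (dense_G ω).exists_mem_open hVopen hVne
  have hρ : |‖θ - pp ω n‖ - ρ0| < δ' := by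
    have := hθV
    simp only [hV, mem_preimage, Metric.mem_ball, Real.dist_eq] at this
    exact this
  have hρδ : ‖θ - pp ω n‖ < δ := by
    have h1 : δ' ≤ δ - ρ0 := le_trans (min_le_right _ _) (min_le_left _ _)
    have := abs_lt.mp hρ
    linarith [this.2]
  have hρε : ‖θ - pp ω n‖ < ε := by
    have h1 : δ' ≤ ε - ρ0 := le_trans (min_le_right _ _) (min_le_right _ _)
    have := abs_lt.mp hρ
    linarith [this.2]
  refine ⟨θ, hθG, hρε, ?_⟩
  -- estimate rr
  have hrr : |rr ω n θ - rr ω n (pp ω n)| < ε/2 := by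
    have hθsn : θ ∈ sn ω n := G_sub_sn ω n hθG
    have hdist : dist θ (pp ω n) < δ := by rwa [dist_eq_norm]
    have := hδ' hθsn hdist
    rwa [Real.dist_eq] at this
  -- estimate f
  have hf : |f ω n θ - w n * t| < ε/2 := by
    have hd2 : dist ‖θ - pp ω n‖ ρ0 < δ₂ := by
      rw [Real.dist_eq]
      exact lt_of_lt_of_le hρ (min_le_left _ _)
    have := hδ₂' hd2
    rw [Real.dist_eq, hsin] at this
    rw [f]
    calc |w n * Real.sin ‖θ - pp ω n‖⁻¹ - w n * t| = w n * |Real.sin ‖θ - pp ω n‖⁻¹ - t| := by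
          rw [← mul_sub, abs_mul, abs_of_pos hwn]
      _ < w n * (ε / (2 * w n)) := by
          apply mul_lt_mul_of_pos_left this hwn
      _ = ε/2 := by field_simp
  have hsplit := gam_split ω n θ
  calc |gam ω θ - (rr ω n (pp ω n) + w n * t)|
      = |(f ω n θ - w n * t) + (rr ω n θ - rr ω n (pp ω n))| := by rw [hsplit]; ring_nf
    _ ≤ |f ω n θ - w n * t| + |rr ω n θ - rr ω n (pp ω n)| := abs_add_le _ _
    _ < ε/2 + ε/2 := add_lt_add hf hrr
    _ = ε := by ring


lemma tendsto_of_dist_lt {X : Type*} [PseudoMetricSpace X] {x : ℕ → X} {a : X}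
    (h : ∀ k, dist (x k) a < 1/(k+1)) : Filter.Tendsto x Filter.atTop (nhds a) := by
  rw [Metric.tendsto_atTop]
  intro ε hε
  obtain ⟨N, hN⟩ := exists_nat_one_div_lt hε
  refine ⟨N, fun k hk => ?_⟩
  calc dist (x k) a < 1/(k+1) := h k
    _ ≤ 1/(N+1) := by
        apply one_div_le_one_div_of_le (by positivity)
        exact_mod_cast by omega
    _ < ε := hN

lemma fiber_pp {ω : ℝ} (hω : Irrational ω) (n : ℤ) (y : ℝ) :
    (pp ω n, y) ∈ A ω ↔ y ∈ Icc (rr ω n (pp ω n) - w n) (rr ω n (pp ω n) + w n) := by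
  constructor
  · exact fiber_pp_subset hω n
  · intro hy
    set cc := rr ω n (pp ω n) with hcc
    have hwn := w_pos n
    set t := (y - cc)/(w n) with ht
    have htmem : t ∈ Icc (-1:ℝ) 1 := by
      rw [ht]
      constructor
      · rw [le_div_iff₀ hwn]; linarith [hy.1]
      · rw [div_le_iff₀ hwn]; linarith [hy.2]
    have hyeq : cc + w n * t = y := by
      rw [ht, mul_div_cancel₀ _ hwn.ne']; ring
    have hch : ∀ k : ℕ, ∃ θ, θ ∈ (rotOrbit ω)ᶜ ∧ ‖θ - pp ω n‖ < 1/(k+1) ∧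
        |gam ω θ - (cc + w n * t)| < 1/(k+1) := by
      intro k
      exact approx hω n htmem (by positivity)
    choose θs hθsG hθs1 hθs2 using hch
    rw [A, mem_closure_iff_seq_limit]
    refine ⟨fun k => (θs k, gam ω (θs k)), fun k => ⟨θs k, hθsG k, rfl⟩, ?_⟩
    apply Filter.Tendsto.prodMk_nhds
    · apply tendsto_of_dist_lt
      intro k
      rw [dist_eq_norm]
      exact hθs1 k
    · apply tendsto_of_dist_lt
      intro k
      rw [Real.dist_eq, hyeq] at *
      exact hθs2 k

lemma fiber_desc {ω : ℝ} (hω : Irrational ω) (θ : UnitAddCircle) :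
    ∃ a b : ℝ, a ≤ b ∧ -1 ≤ a ∧ b ≤ 1 ∧ ∀ y, ((θ, y) ∈ A ω ↔ y ∈ Icc a b) := by
  by_cases hθ : θ ∈ (rotOrbit ω)ᶜ
  · refine ⟨gam ω θ, gam ω θ, le_refl _, ?_, ?_, fun y => ?_⟩
    · linarith [(abs_le.mp (gam_bound ω θ)).1]
    · linarith [(abs_le.mp (gam_bound ω θ)).2]
    · rw [fiber_G hθ, Icc_self, mem_singleton_iff]
  · rw [notMem_compl_iff] at hθ
    rw [rotOrbit_eq] at hθ
    obtain ⟨n, hn⟩ := hθ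
    subst hn
    have hwn := w_pos n
    have hrb := abs_le.mp (rr_bound ω n (pp ω n))
    refine ⟨rr ω n (pp ω n) - w n, rr ω n (pp ω n) + w n, by linarith, by linarith, by linarith,
      fun y => fiber_pp hω n y⟩

lemma A_y_mem {ω : ℝ} (hω : Irrational ω) {θ : UnitAddCircle} {y : ℝ}
    (h : (θ, y) ∈ A ω) : y ∈ Icc (-1:ℝ) 1 := by
  obtain ⟨a, b, hab, ha, hb, hiff⟩ := fiber_desc hω θ
  have := (hiff y).mp h
  exact ⟨le_trans ha this.1, le_trans this.2 hb⟩

lemma usc {ω : ℝ} (hω : Irrational ω) {θ : UnitAddCircle} {V : Set (UnitAddCircle × ℝ)}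
    (hV : IsOpen V) (h : ∀ y, (θ, y) ∈ A ω → (θ, y) ∈ V) :
    ∃ ε > 0, ∀ θ', dist θ' θ < ε → ∀ y, (θ', y) ∈ A ω → (θ', y) ∈ V := by
  by_contra hcon
  push_neg at hcon
  have hch : ∀ k : ℕ, ∃ θ' , dist θ' θ < 1/(k+1) ∧ ∃ y, (θ', y) ∈ A ω ∧ (θ', y) ∉ V := by
    intro k
    obtain ⟨θ', h1, y, h2, h3⟩ := hcon (1/(k+1)) (by positivity)
    exact ⟨θ', h1, y, h2, h3⟩
  choose θs hθs ys hys hysV using hch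
  obtain ⟨y, hymem, φ, hφ, hconv⟩ := (isCompact_Icc (a := (-1:ℝ)) (b := 1)).tendsto_subseq
    (fun k => A_y_mem hω (hys k))
  have hθconv : Filter.Tendsto (fun k => θs (φ k)) Filter.atTop (nhds θ) := by
    apply tendsto_of_dist_lt
    intro k
    calc dist (θs (φ k)) θ < 1/(φ k + 1) := hθs (φ k)
      _ ≤ 1/(k+1) := by
          apply one_div_le_one_div_of_le (by positivity)
          exact_mod_cast by have : k ≤ φ k := hφ.le_apply; omega
  have hzconv : Filter.Tendsto (fun k => (θs (φ k), ys (φ k))) Filter.atTop (nhds (θ, y)) :=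
    hθconv.prodMk_nhds hconv
  have hAmem : (θ, y) ∈ A ω :=
    isClosed_closure.mem_of_tendsto hzconv (Filter.Eventually.of_forall (fun k => hys (φ k)))
  have hVc : (θ, y) ∈ Vᶜ :=
    hV.isClosed_compl.mem_of_tendsto hzconv (Filter.Eventually.of_forall (fun k => hysV (φ k)))
  exact hVc (h y hAmem)

lemma A_isConnected {ω : ℝ} (hω : Irrational ω) : IsConnected (A ω) := by
  obtain ⟨θ0, hθ0, -⟩ := (dense_G ω).exists_mem_open isOpen_univ ⟨0, trivial⟩
  refine ⟨⟨(θ0, gam ω θ0), subset_closure ⟨θ0, hθ0, rfl⟩⟩, ?_⟩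
  intro u v hu hv hcov hune hvne
  by_contra hne
  rw [not_nonempty_iff_eq_empty] at hne
  have hdisjA : ∀ z, z ∈ A ω → z ∈ u → z ∈ v → False := fun z h1 h2 h3 =>
    absurd (⟨z, h1, h2, h3⟩ : (A ω ∩ (u ∩ v)).Nonempty)
      (by rw [hne]; exact not_nonempty_empty)
  set S := {θ : UnitAddCircle | ∀ y, (θ, y) ∈ A ω → (θ, y) ∈ u} with hS
  set T := {θ : UnitAddCircle | ∀ y, (θ, y) ∈ A ω → (θ, y) ∈ v} with hT
  have hST : ∀ θ : UnitAddCircle, θ ∈ S ∪ T := by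
    intro θ
    obtain ⟨a, b, hab, -, -, hiff⟩ := fiber_desc hω θ
    set seg := (fun y => (θ, y)) '' Icc a b with hseg
    have hsegA : seg ⊆ A ω := by rintro _ ⟨y, hy, rfl⟩; exact (hiff y).mpr hy
    have hsegpre : IsPreconnected seg :=
      isPreconnected_Icc.image _ (Continuous.prodMk_right θ).continuousOn
    have hsegsub : seg ⊆ u ∪ v := fun z hz => hcov (hsegA hz)
    rcases (seg ∩ u).eq_empty_or_nonempty with h1 | h1
    · right
      intro y hy
      have hyseg : (θ, y) ∈ seg := ⟨y, (hiff y).mp hy, rfl⟩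
      rcases hsegsub hyseg with h | h
      · exact absurd (⟨(θ,y), hyseg, h⟩ : (seg ∩ u).Nonempty)
          (by rw [h1]; exact not_nonempty_empty)
      · exact h
    · rcases (seg ∩ v).eq_empty_or_nonempty with h2 | h2
      · left
        intro y hy
        have hyseg : (θ, y) ∈ seg := ⟨y, (hiff y).mp hy, rfl⟩
        rcases hsegsub hyseg with h | h
        · exact h
        · exact absurd (⟨(θ,y), hyseg, h⟩ : (seg ∩ v).Nonempty)
            (by rw [h2]; exact not_nonempty_empty)
      · exfalso
        obtain ⟨z, hzseg, hzu, hzv⟩ := hsegpre u v hu hv hsegsub h1 h2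
        exact hdisjA z (hsegA hzseg) hzu hzv
  have hSopen : IsOpen S := by
    rw [Metric.isOpen_iff]
    intro θ hθ
    obtain ⟨ε, hε, husc⟩ := usc hω hu hθ
    exact ⟨ε, hε, fun θ' hθ' y hy => husc θ' hθ' y hy⟩
  have hTopen : IsOpen T := by
    rw [Metric.isOpen_iff]
    intro θ hθ
    obtain ⟨ε, hε, husc⟩ := usc hω hv hθ
    exact ⟨ε, hε, fun θ' hθ' y hy => husc θ' hθ' y hy⟩
  have hmemA : ∀ z : UnitAddCircle × ℝ, z ∈ A ω → ((z.1 : UnitAddCircle), (z.2 : ℝ)) ∈ A ω := by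
    intro z hz; rwa [Prod.mk.eta]
  obtain ⟨zu, hzuA, hzuu⟩ := hune
  obtain ⟨zv, hzvA, hzvv⟩ := hvne
  have hSne : S.Nonempty := by
    rcases hST zu.1 with h | h
    · exact ⟨zu.1, h⟩
    · exfalso
      have := h zu.2 (hmemA zu hzuA)
      rw [Prod.mk.eta] at this
      exact hdisjA zu hzuA hzuu this
  have hTne : T.Nonempty := by
    rcases hST zv.1 with h | h
    · exfalso
      have := h zv.2 (hmemA zv hzvA)
      rw [Prod.mk.eta] at this
      exact hdisjA zv hzvA this hzvv
    · exact ⟨zv.1, h⟩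
  obtain ⟨θ, -, hθS, hθT⟩ := isPreconnected_univ (α := UnitAddCircle) S T hSopen hTopen
    (fun θ _ => hST θ) ⟨hSne.choose, trivial, hSne.choose_spec⟩
    ⟨hTne.choose, trivial, hTne.choose_spec⟩
  obtain ⟨a, b, hab, -, -, hiff⟩ := fiber_desc hω θ
  have haA : (θ, a) ∈ A ω := (hiff a).mpr ⟨le_refl a, hab⟩
  exact hdisjA (θ, a) haA (hθS a haA) (hθT a haA)

lemma no_arc {ω : ℝ} (hω : Irrational ω) :
    ¬ ∃ (U : Set UnitAddCircle) (ξ : UnitAddCircle → ℝ),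
        IsOpen U ∧ U.Nonempty ∧ IsPreconnected U ∧ ContinuousOn ξ U ∧
        (∀ θ ∈ U, ξ θ ∈ Icc (-2:ℝ) 2) ∧
        graphOn U ξ ⊆ A ω := by
  rintro ⟨U, ξ, hUopen, hUne, -, hξcont, -, hsub⟩
  obtain ⟨x, hxO, hxU⟩ := (dense_orbit hω).exists_mem_open hUopen hUne
  rw [rotOrbit_eq] at hxO
  obtain ⟨n, rfl⟩ := hxO
  set cc := rr ω n (pp ω n) with hcc
  have hwn := w_pos n
  have hcontAt : ContinuousAt ξ (pp ω n) := hξcont.continuousAt (hUopen.mem_nhds hxU)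
  have key : ∀ t : ℝ, t ∈ Icc (-1:ℝ) 1 → ξ (pp ω n) = cc + w n * t := by
    intro t ht
    have hch : ∀ k : ℕ, ∃ θ, θ ∈ (rotOrbit ω)ᶜ ∧ ‖θ - pp ω n‖ < 1/(k+1) ∧
        |gam ω θ - (cc + w n * t)| < 1/(k+1) := fun k => approx hω n ht (by positivity)
    choose θs hθsG hθs1 hθs2 using hch
    have hθconv : Filter.Tendsto θs Filter.atTop (nhds (pp ω n)) := by
      apply tendsto_of_dist_lt
      intro k
      rw [dist_eq_norm]
      exact hθs1 k
    have hgconv : Filter.Tendsto (fun k => gam ω (θs k)) Filter.atTop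
        (nhds (cc + w n * t)) := by
      apply tendsto_of_dist_lt
      intro k
      rw [Real.dist_eq]
      exact hθs2 k
    have hξconv : Filter.Tendsto (fun k => ξ (θs k)) Filter.atTop (nhds (ξ (pp ω n))) :=
      hcontAt.tendsto.comp hθconv
    have hev : ∀ᶠ k in Filter.atTop, ξ (θs k) = gam ω (θs k) := by
      have hevU : ∀ᶠ k in Filter.atTop, θs k ∈ U := hθconv (hUopen.mem_nhds hxU)
      filter_upwards [hevU] with k hk
      have : (θs k, ξ (θs k)) ∈ A ω := hsub ⟨θs k, hk, rfl⟩
      exact (fiber_G (hθsG k) _).mp this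
    exact tendsto_nhds_unique (hξconv.congr' hev) hgconv
  have h1 := key 1 ⟨by norm_num, le_refl 1⟩
  have h2 := key (-1) ⟨le_refl _, by norm_num⟩
  rw [h1] at h2
  nlinarith

/-! ### the complement has exactly two connected components -/

def Up (ω : ℝ) : Set (UnitAddCircle × ℝ) := {z | ∀ y, (z.1, y) ∈ A ω → y < z.2}
def Lo (ω : ℝ) : Set (UnitAddCircle × ℝ) := {z | ∀ y, (z.1, y) ∈ A ω → z.2 < y}

lemma Up_open {ω : ℝ} (hω : Irrational ω) : IsOpen (Up ω) := by
  rw [isOpen_iff_forall_mem_open]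
  intro z hz
  obtain ⟨a, b, hab, -, -, hiff⟩ := fiber_desc hω z.1
  have hbz : b < z.2 := hz b ((hiff b).mpr ⟨hab, le_refl b⟩)
  set m := (b + z.2)/2 with hm
  have hVsub : ∀ y, (z.1, y) ∈ A ω → (z.1, y) ∈ (univ : Set UnitAddCircle) ×ˢ Iio m := by
    intro y hy
    refine ⟨trivial, ?_⟩
    have := ((hiff y).mp hy).2
    simp only [mem_Iio]
    rw [hm]; linarith
  obtain ⟨ε, hε, husc⟩ := usc hω (isOpen_univ.prod isOpen_Iio) hVsub
  refine ⟨Metric.ball z.1 ε ×ˢ Ioi m, ?_, (Metric.isOpen_ball).prod isOpen_Ioi, ?_⟩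
  · rintro ⟨θ', y'⟩ ⟨hθ', hy'⟩
    intro y hy
    have := (husc θ' (by simpa [Metric.mem_ball] using hθ') y hy).2
    simp only [mem_Iio] at this
    simp only [mem_Ioi] at hy'
    linarith
  · exact ⟨by simp [Metric.mem_ball, hε], by simp only [mem_Ioi]; rw [hm]; linarith⟩

lemma Lo_open {ω : ℝ} (hω : Irrational ω) : IsOpen (Lo ω) := by
  rw [isOpen_iff_forall_mem_open]
  intro z hz
  obtain ⟨a, b, hab, -, -, hiff⟩ := fiber_desc hω z.1
  have hbz : z.2 < a := hz a ((hiff a).mpr ⟨le_refl a, hab⟩)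
  set m := (a + z.2)/2 with hm
  have hVsub : ∀ y, (z.1, y) ∈ A ω → (z.1, y) ∈ (univ : Set UnitAddCircle) ×ˢ Ioi m := by
    intro y hy
    refine ⟨trivial, ?_⟩
    have := ((hiff y).mp hy).1
    simp only [mem_Ioi]
    rw [hm]; linarith
  obtain ⟨ε, hε, husc⟩ := usc hω (isOpen_univ.prod isOpen_Ioi) hVsub
  refine ⟨Metric.ball z.1 ε ×ˢ Iio m, ?_, (Metric.isOpen_ball).prod isOpen_Iio, ?_⟩
  · rintro ⟨θ', y'⟩ ⟨hθ', hy'⟩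
    intro y hy
    have := (husc θ' (by simpa [Metric.mem_ball] using hθ') y hy).2
    simp only [mem_Ioi] at this
    simp only [mem_Iio] at hy'
    linarith
  · exact ⟨by simp [Metric.mem_ball, hε], by simp only [mem_Iio]; rw [hm]; linarith⟩

def CC (ω : ℝ) : Set (UnitAddCircle × ℝ) :=
  ((univ : Set UnitAddCircle) ×ˢ Icc (-2:ℝ) 2) \ A ω

lemma C_cover {ω : ℝ} (hω : Irrational ω) : CC ω ⊆ Up ω ∪ Lo ω := by
  rintro ⟨θ, y0⟩ ⟨⟨-, hy0⟩, hzA⟩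
  obtain ⟨a, b, hab, -, -, hiff⟩ := fiber_desc hω θ
  have : y0 ∉ Icc a b := fun h => hzA ((hiff y0).mpr h)
  rw [mem_Icc, not_and_or, not_le, not_le] at this
  rcases this with h | h
  · right
    intro y hy
    have := ((hiff y).mp hy).1
    simp only
    linarith
  · left
    intro y hy
    have := ((hiff y).mp hy).2
    simp only
    linarith

lemma UpLo_disj {ω : ℝ} (hω : Irrational ω) (z : UnitAddCircle × ℝ) :
    z ∈ Up ω → z ∈ Lo ω → False := by
  intro h1 h2
  obtain ⟨a, b, hab, -, -, hiff⟩ := fiber_desc hω z.1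
  have haA : (z.1, a) ∈ A ω := (hiff a).mpr ⟨le_refl a, hab⟩
  exact absurd (h2 a haA) (not_lt.mpr (h1 a haA).le)

lemma top_mem {ω : ℝ} (hω : Irrational ω) (θ : UnitAddCircle) :
    (θ, (2:ℝ)) ∈ CC ω ∩ Up ω := by
  obtain ⟨a, b, hab, -, hb1, hiff⟩ := fiber_desc hω θ
  refine ⟨⟨⟨trivial, by norm_num, by norm_num⟩, ?_⟩, ?_⟩
  · intro h
    have := ((hiff 2).mp h).2
    linarith
  · intro y hy
    have := ((hiff y).mp hy).2
    simp only
    linarith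

lemma bot_mem {ω : ℝ} (hω : Irrational ω) (θ : UnitAddCircle) :
    (θ, (-2:ℝ)) ∈ CC ω ∩ Lo ω := by
  obtain ⟨a, b, hab, ha1, -, hiff⟩ := fiber_desc hω θ
  refine ⟨⟨⟨trivial, by norm_num, by norm_num⟩, ?_⟩, ?_⟩
  · intro h
    have := ((hiff (-2)).mp h).1
    linarith
  · intro y hy
    have := ((hiff y).mp hy).1
    simp only
    linarith

instance : PreconnectedSpace UnitAddCircle := by infer_instance

lemma CUp_preconn {ω : ℝ} (hω : Irrational ω) : IsPreconnected (CC ω ∩ Up ω) := by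
  apply isPreconnected_of_forall (x := ((0:UnitAddCircle), (2:ℝ)))
  rintro ⟨θ, y0⟩ hz
  have hy02 : y0 ≤ 2 := hz.1.1.2.2
  refine ⟨({θ} ×ˢ Icc y0 2) ∪ ((fun θ' : UnitAddCircle => (θ', (2:ℝ))) '' univ), ?_, ?_, ?_, ?_⟩
  · rintro ⟨θ', y'⟩ hz'
    rcases hz' with ⟨hθ', hy'⟩ | ⟨θ'', -, he⟩
    · simp only [mem_singleton_iff] at hθ'
      subst hθ'
      have hy0m2 : (-2:ℝ) ≤ y0 := hz.1.1.2.1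
      refine ⟨⟨⟨trivial, by constructor <;> [linarith [hy'.1]; exact hy'.2]⟩, ?_⟩, ?_⟩
      · intro hmem
        have := hz.2 y' hmem
        simp only at this
        linarith [hy'.1]
      · intro y hy
        have := hz.2 y hy
        simp only at this ⊢
        linarith [hy'.1]
    · rw [← he]
      exact top_mem hω θ''
  · right; exact ⟨0, trivial, rfl⟩
  · left; exact ⟨rfl, le_refl y0, hy02⟩
  · apply IsPreconnected.union (θ, (2:ℝ))
    · exact ⟨rfl, hy02, le_refl 2⟩
    · exact ⟨θ, trivial, rfl⟩
    · exact isPreconnected_singleton.prod isPreconnected_Icc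
    · exact isPreconnected_univ.image _ (continuous_id.prodMk continuous_const).continuousOn

lemma CLo_preconn {ω : ℝ} (hω : Irrational ω) : IsPreconnected (CC ω ∩ Lo ω) := by
  apply isPreconnected_of_forall (x := ((0:UnitAddCircle), (-2:ℝ)))
  rintro ⟨θ, y0⟩ hz
  have hy02 : (-2:ℝ) ≤ y0 := hz.1.1.2.1
  refine ⟨({θ} ×ˢ Icc (-2) y0) ∪ ((fun θ' : UnitAddCircle => (θ', (-2:ℝ))) '' univ), ?_, ?_, ?_, ?_⟩
  · rintro ⟨θ', y'⟩ hz'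
    rcases hz' with ⟨hθ', hy'⟩ | ⟨θ'', -, he⟩
    · simp only [mem_singleton_iff] at hθ'
      subst hθ'
      have hy0m2 : y0 ≤ (2:ℝ) := hz.1.1.2.2
      refine ⟨⟨⟨trivial, by constructor <;> [exact hy'.1; linarith [hy'.2]]⟩, ?_⟩, ?_⟩
      · intro hmem
        have := hz.2 y' hmem
        simp only at this
        linarith [hy'.2]
      · intro y hy
        have := hz.2 y hy
        simp only at this ⊢
        linarith [hy'.2]
    · rw [← he]
      exact bot_mem hω θ''
  · right; exact ⟨0, trivial, rfl⟩
  · left; exact ⟨rfl, hy02, le_refl y0⟩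
  · apply IsPreconnected.union (θ, (-2:ℝ))
    · exact ⟨rfl, le_refl _, hy02⟩
    · exact ⟨θ, trivial, rfl⟩
    · exact isPreconnected_singleton.prod isPreconnected_Icc
    · exact isPreconnected_univ.image _ (continuous_id.prodMk continuous_const).continuousOn

lemma two_components {ω : ℝ} (hω : Irrational ω) :
    Nonempty (ConnectedComponents ↥(CC ω) ≃ Fin 2) := by
  classical
  set X := ↥(CC ω) with hX
  set U' : Set X := {x | (x : UnitAddCircle × ℝ) ∈ Up ω} with hU'
  set L' : Set X := {x | (x : UnitAddCircle × ℝ) ∈ Lo ω} with hL'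
  have hU'open : IsOpen U' := (Up_open hω).preimage continuous_subtype_val
  have hL'open : IsOpen L' := (Lo_open hω).preimage continuous_subtype_val
  have hcover : ∀ x : X, x ∈ U' ∨ x ∈ L' := fun x => C_cover hω x.2
  have hdisj : ∀ x : X, x ∈ U' → x ∈ L' → False := fun x h1 h2 => UpLo_disj hω _ h1 h2
  have hULc : (U' : Set X)ᶜ = L' := by
    ext x
    simp only [mem_compl_iff]
    constructor
    · intro h; exact (hcover x).resolve_left h
    · intro h h'; exact hdisj x h' h
  have hU'clopen : IsClopen U' := by
    constructor
    · rw [← isOpen_compl_iff, hULc]; exact hL'open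
    · exact hU'open
  have hL'clopen : IsClopen L' := by
    constructor
    · rw [← isOpen_compl_iff]
      have : (L' : Set X)ᶜ = U' := by rw [← hULc, compl_compl]
      rw [this]; exact hU'open
    · exact hL'open
  have himgU : Subtype.val '' U' = CC ω ∩ Up ω := by
    ext z
    constructor
    · rintro ⟨x, hx, rfl⟩; exact ⟨x.2, hx⟩
    · rintro ⟨h1, h2⟩; exact ⟨⟨z, h1⟩, h2, rfl⟩
  have himgL : Subtype.val '' L' = CC ω ∩ Lo ω := by
    ext z
    constructor
    · rintro ⟨x, hx, rfl⟩; exact ⟨x.2, hx⟩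
    · rintro ⟨h1, h2⟩; exact ⟨⟨z, h1⟩, h2, rfl⟩
  have hU'pre : IsPreconnected U' := by
    rw [← Topology.IsInducing.subtypeVal.isPreconnected_image, himgU]
    exact CUp_preconn hω
  have hL'pre : IsPreconnected L' := by
    rw [← Topology.IsInducing.subtypeVal.isPreconnected_image, himgL]
    exact CLo_preconn hω
  have hcompU : ∀ x ∈ U', connectedComponent x = U' := fun x hx =>
    subset_antisymm (hU'clopen.connectedComponent_subset hx)
      (hU'pre.subset_connectedComponent hx)
  have hcompL : ∀ x ∈ L', connectedComponent x = L' := fun x hx =>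
    subset_antisymm (hL'clopen.connectedComponent_subset hx)
      (hL'pre.subset_connectedComponent hx)
  set φ : X → Fin 2 := fun x => if x ∈ U' then 0 else 1 with hφ
  have hresp : ∀ a b : X, connectedComponent a = connectedComponent b → φ a = φ b := by
    intro a b hab
    by_cases ha : a ∈ U'
    · have hb : b ∈ U' := by
        have hm : b ∈ connectedComponent b := mem_connectedComponent
        rw [← hab, hcompU a ha] at hm
        exact hm
      simp [hφ, ha, hb]
    · have ha' : a ∈ L' := (hcover a).resolve_left ha
      have hb : b ∈ L' := by
        have hm : b ∈ connectedComponent b := mem_connectedComponent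
        rw [← hab, hcompL a ha'] at hm
        exact hm
      have hb' : b ∉ U' := fun h => hdisj b h hb
      simp [hφ, ha, hb']
  let F : ConnectedComponents X → Fin 2 := Quotient.lift φ (fun a b h => hresp a b h)
  have hFcoe : ∀ a : X, F (ConnectedComponents.mk a) = φ a := fun a => rfl
  have hx0mem := (top_mem hω (0 : UnitAddCircle))
  have hx1mem := (bot_mem hω (0 : UnitAddCircle))
  set x0 : X := ⟨((0:UnitAddCircle), (2:ℝ)), hx0mem.1⟩ with hx0d
  set x1 : X := ⟨((0:UnitAddCircle), (-2:ℝ)), hx1mem.1⟩ with hx1d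
  have hx0U : x0 ∈ U' := hx0mem.2
  have hx1L : x1 ∈ L' := hx1mem.2
  have hx1U : x1 ∉ U' := fun h => hdisj x1 h hx1L
  have hinj : Function.Injective F := by
    intro p q hpq
    obtain ⟨a, rfl⟩ := ConnectedComponents.surjective_coe p
    obtain ⟨b, rfl⟩ := ConnectedComponents.surjective_coe q
    rw [hFcoe, hFcoe] at hpq
    rw [ConnectedComponents.coe_eq_coe]
    by_cases ha : a ∈ U' <;> by_cases hb : b ∈ U'
    · rw [hcompU a ha, hcompU b hb]
    · exfalso; simp [hφ, ha, hb] at hpq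
    · exfalso; simp [hφ, ha, hb] at hpq
    · rw [hcompL a ((hcover a).resolve_left ha), hcompL b ((hcover b).resolve_left hb)]
  have hsurj : Function.Surjective F := by
    intro i
    fin_cases i
    · exact ⟨ConnectedComponents.mk x0, by rw [hFcoe]; simp [hφ, hx0U]⟩
    · exact ⟨ConnectedComponents.mk x1, by rw [hFcoe]; simp [hφ, hx1U]⟩
  exact ⟨Equiv.ofBijective F ⟨hinj, hsurj⟩⟩


end S14

/-- For every irrational `ω ∈ [0,1]` there is a continuous map
`γ : G → [-1,1]` on the residual set `G = S¹ \ {nω mod 1 : n ∈ ℤ}` such that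
`A = closure (graph γ)` is connected, contains no arc of a curve, and is such that
`Ω \ A` has exactly two connected components, where `Ω = S¹ × [-2,2]`. -/
theorem statement14 (ω : ℝ) (hω : Irrational ω) (hω01 : ω ∈ Icc (0:ℝ) 1) :
    ∃ γ : UnitAddCircle → ℝ,
      (rotOrbit ω)ᶜ ∈ residual UnitAddCircle ∧
      ContinuousOn γ (rotOrbit ω)ᶜ ∧
      (∀ θ ∈ (rotOrbit ω)ᶜ, γ θ ∈ Icc (-1:ℝ) 1) ∧
      IsConnected (closure (graphOn (rotOrbit ω)ᶜ γ)) ∧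
      (¬ ∃ (U : Set UnitAddCircle) (ξ : UnitAddCircle → ℝ),
          IsOpen U ∧ U.Nonempty ∧ IsPreconnected U ∧ ContinuousOn ξ U ∧
          (∀ θ ∈ U, ξ θ ∈ Icc (-2:ℝ) 2) ∧
          graphOn U ξ ⊆ closure (graphOn (rotOrbit ω)ᶜ γ)) ∧
      Nonempty (ConnectedComponents
        ↥((((univ : Set UnitAddCircle) ×ˢ Icc (-2:ℝ) 2) \
            closure (graphOn (rotOrbit ω)ᶜ γ))) ≃ Fin 2) := by
  refine ⟨S14.gam ω, S14.residual_G ω, ?_, ?_, ?_, ?_, ?_⟩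
  · have := S14.gam_continuousOn ω
    rwa [← S14.rotOrbit_eq] at this
  · intro θ _
    have := abs_le.mp (S14.gam_bound ω θ)
    exact ⟨by linarith [this.1], by linarith [this.2]⟩
  · exact S14.A_isConnected hω
  · exact S14.no_arc hω
  · exact S14.two_components hω
end

section
/- Let A ⊆ Ω = S¹ × I be a compact set with π(A) = S¹ such that for every θ ∈ S¹ the fiber A_θ = {x ∈ I : (θ, x) ∈ A} is a connected subset of ℝ. Then A is connected. -/
open Set

/-- A compact circular subset of the cylinder `Ω = S¹ × I`, all of
whose fibers are connected subsets of `ℝ`, is connected. -/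
theorem statement15 (a b : ℝ) (hab : a ≤ b)
    (A : Set (UnitAddCircle × ℝ)) (hAΩ : A ⊆ univ ×ˢ Icc a b)
    (hAc : IsCompact A) (hAcirc : Prod.fst '' A = univ)
    (hfib : ∀ θ : UnitAddCircle, IsPreconnected {x : ℝ | (θ, x) ∈ A}) :
    IsConnected A := by
  have hfibne : ∀ θ : UnitAddCircle, ∃ x, (θ, x) ∈ A := by
    intro θ
    have : θ ∈ Prod.fst '' A := by rw [hAcirc]; trivial
    obtain ⟨⟨θ', x⟩, hp, rfl⟩ := this
    exact ⟨x, hp⟩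
  constructor
  · obtain ⟨x, hx⟩ := hfibne 0
    exact ⟨_, hx⟩
  · intro u v hu hv hcov hAu hAv
    by_contra hempty
    rw [not_nonempty_iff_eq_empty] at hempty
    -- each fiber lies entirely in u or entirely in v
    have key : ∀ θ : UnitAddCircle,
        (∀ x, (θ, x) ∈ A → (θ, x) ∈ u) ∨ (∀ x, (θ, x) ∈ A → (θ, x) ∈ v) := by
      intro θ
      have hG : IsPreconnected (Prod.mk θ '' {x : ℝ | (θ, x) ∈ A}) :=
        (hfib θ).image _ (Continuous.prodMk_right θ).continuousOn
      have hGA : Prod.mk θ '' {x : ℝ | (θ, x) ∈ A} ⊆ A := by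
        rintro p ⟨x, hx, rfl⟩; exact hx
      by_contra h
      push_neg at h
      obtain ⟨⟨x₁, hx₁, hx₁u⟩, ⟨x₂, hx₂, hx₂v⟩⟩ := h
      have h1 : (θ, x₁) ∈ v := (hcov hx₁).resolve_left hx₁u
      have h2 : (θ, x₂) ∈ u := (hcov hx₂).resolve_right hx₂v
      obtain ⟨p, hpG, hpu, hpv⟩ := hG u v hu hv (hGA.trans hcov)
        ⟨(θ, x₂), ⟨x₂, hx₂, rfl⟩, h2⟩ ⟨(θ, x₁), ⟨x₁, hx₁, rfl⟩, h1⟩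
      have : p ∈ A ∩ (u ∩ v) := ⟨hGA hpG, hpu, hpv⟩
      rw [hempty] at this
      exact this
    set Tu : Set UnitAddCircle := {θ | ∀ x, (θ, x) ∈ A → (θ, x) ∈ u} with hTu
    set Tv : Set UnitAddCircle := {θ | ∀ x, (θ, x) ∈ A → (θ, x) ∈ v} with hTv
    have hopen : ∀ (w : Set (UnitAddCircle × ℝ)), IsOpen w →
        IsOpen {θ : UnitAddCircle | ∀ x, (θ, x) ∈ A → (θ, x) ∈ w} := by
      intro w hw
      have hcl : IsClosed (Prod.fst '' (A \ w)) :=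
        ((hAc.diff hw).image continuous_fst).isClosed
      have : {θ : UnitAddCircle | ∀ x, (θ, x) ∈ A → (θ, x) ∈ w}
          = (Prod.fst '' (A \ w))ᶜ := by
        ext θ
        simp only [mem_setOf_eq, mem_compl_iff, mem_image, Prod.exists, not_exists]
        constructor
        · rintro h p x ⟨⟨hA, hnw⟩, rfl⟩
          exact hnw (h x hA)
        · intro h x hA
          by_contra hnw
          exact h θ x ⟨⟨hA, hnw⟩, rfl⟩
      rw [this]
      exact hcl.isOpen_compl
    have hdisj : Tu ∩ Tv = ∅ := by
      ext θ
      simp only [mem_inter_iff, mem_empty_iff_false, iff_false]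
      rintro ⟨h1, h2⟩
      obtain ⟨x, hx⟩ := hfibne θ
      have : (θ, x) ∈ A ∩ (u ∩ v) := ⟨hx, h1 x hx, h2 x hx⟩
      rw [hempty] at this
      exact this
    obtain ⟨⟨θ₁, x₁⟩, hp1A, hp1u⟩ := hAu
    obtain ⟨⟨θ₂, x₂⟩, hp2A, hp2v⟩ := hAv
    have hθ₁ : θ₁ ∈ Tu := by
      rcases key θ₁ with h | h
      · exact h
      · exact absurd (h x₁ hp1A) (fun hv' => by
          have : (θ₁, x₁) ∈ A ∩ (u ∩ v) := ⟨hp1A, hp1u, hv'⟩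
          rw [hempty] at this; exact this)
    have hθ₂ : θ₂ ∈ Tv := by
      rcases key θ₂ with h | h
      · exact absurd (h x₂ hp2A) (fun hu' => by
          have : (θ₂, x₂) ∈ A ∩ (u ∩ v) := ⟨hp2A, hu', hp2v⟩
          rw [hempty] at this; exact this)
      · exact h
    obtain ⟨θ, -, hθu, hθv⟩ := isPreconnected_univ Tu Tv (hopen u hu) (hopen v hv)
      (fun θ _ => key θ) ⟨θ₁, trivial, hθ₁⟩ ⟨θ₂, trivial, hθ₂⟩
    have : θ ∈ Tu ∩ Tv := ⟨hθu, hθv⟩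
    rw [hdisj] at this
    exact this
end

section
/- Convergence of pseudo-curve generators in the supremum pseudo-metric implies Hausdorff convergence of the associated pseudo-curves: if (φ_n, G_n), n ≥ 1, and (φ, G) are pseudo-curve generators with d∞((φ_n,G_n),(φ,G)) → 0 as n → ∞, then the pseudo-curves PC_n (closures of the graphs of φ_n) converge to the pseudo-curve PC (closure of the graph of φ) in the Hausdorff distance: H(PC_n, PC) → 0. -/
/-!
For a function continuous on a set, the closure of its graph is already the closure of its graph
over any dense subset. So both pseudo-curves are closures of graphs over the common residual (hence
dense) set `G n ∩ G0`, and over a common domain two graphs lie within Hausdorff distance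
`sup |φ n - ψ|` of each other: match `(θ, φ n θ)` with `(θ, ψ θ)`.
-/

open Set Metric Filter

lemma hausdorffDist_image_le_of_dist_le {α β : Type*} [PseudoMetricSpace β] {f g : α → β}
    {S : Set α} {r : ℝ} (hr : 0 ≤ r) (h : ∀ x ∈ S, dist (f x) (g x) ≤ r) :
    hausdorffDist (f '' S) (g '' S) ≤ r := by
  apply hausdorffDist_le_of_mem_dist hr
  · rintro _ ⟨x, hx, rfl⟩
    exact ⟨g x, mem_image_of_mem g hx, h x hx⟩
  · rintro _ ⟨x, hx, rfl⟩
    exact ⟨f x, mem_image_of_mem f hx, dist_comm (f x) (g x) ▸ h x hx⟩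

lemma closure_graphOn_eq_of_dense {G S : Set UnitAddCircle} {φ : UnitAddCircle → ℝ}
    (hS : S ⊆ G) (hd : Dense S) (hc : ContinuousOn φ G) :
    closure (graphOn G φ) = closure (graphOn S φ) := by
  refine (closure_minimal ?_ isClosed_closure).antisymm (closure_mono (image_mono hS))
  rintro _ ⟨θ, hθ, rfl⟩
  exact ((continuousWithinAt_id.prodMk (hc θ hθ)).mono hS).mem_closure_image (hd θ)

lemma hausdorffDist_closure_graphOn_le {G G' : Set UnitAddCircle} {φ ψ : UnitAddCircle → ℝ}
    (hd : Dense (G ∩ G')) (hφ : ContinuousOn φ G) (hψ : ContinuousOn ψ G') {r : ℝ} (hr : 0 ≤ r)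
    (h : ∀ θ ∈ G ∩ G', |φ θ - ψ θ| ≤ r) :
    hausdorffDist (closure (graphOn G φ)) (closure (graphOn G' ψ)) ≤ r := by
  rw [closure_graphOn_eq_of_dense inter_subset_left hd hφ,
    closure_graphOn_eq_of_dense inter_subset_right hd hψ, hausdorffDist_closure]
  refine hausdorffDist_image_le_of_dist_le hr fun θ hθ => ?_
  simpa [Prod.dist_eq, Real.dist_eq] using h θ hθ

theorem statement19_general (a b : ℝ)
    (G : ℕ → Set UnitAddCircle) (hG : ∀ n, G n ∈ residual UnitAddCircle)
    (φ : ℕ → UnitAddCircle → ℝ)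
    (hφc : ∀ n, ContinuousOn (φ n) (G n)) (hφI : ∀ n, ∀ θ ∈ G n, φ n θ ∈ Icc a b)
    (G0 : Set UnitAddCircle) (hG0 : G0 ∈ residual UnitAddCircle)
    (ψ : UnitAddCircle → ℝ) (hψc : ContinuousOn ψ G0) (hψI : ∀ θ ∈ G0, ψ θ ∈ Icc a b)
    (hconv : Tendsto (fun n => sSup ((fun θ => |φ n θ - ψ θ|) '' (G n ∩ G0)))
      atTop (nhds 0)) :
    Tendsto (fun n => hausdorffDist (closure (graphOn (G n) (φ n)))
        (closure (graphOn G0 ψ))) atTop (nhds 0) := by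
  refine squeeze_zero (fun n => hausdorffDist_nonneg) (fun n => ?_) hconv
  set D := (fun θ => |φ n θ - ψ θ|) '' (G n ∩ G0)
  -- the sup is over a set of reals bounded by `b - a`, so it really bounds each of its elements
  have hD : BddAbove D := ⟨b - a, by
    rintro _ ⟨θ, hθ, rfl⟩
    exact Real.dist_le_of_mem_Icc (hφI n θ hθ.1) (hψI θ hθ.2)⟩
  refine hausdorffDist_closure_graphOn_le (dense_of_mem_residual (inter_mem (hG n) hG0))
    (hφc n) hψc (Real.sSup_nonneg ?_) fun θ hθ => le_csSup hD (mem_image_of_mem _ hθ)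
  rintro _ ⟨θ, -, rfl⟩
  exact abs_nonneg _

/-- Convergence of pseudo-curve generators in the supremum
pseudo-metric implies Hausdorff convergence of the associated pseudo-curves. -/
theorem statement19 (a b : ℝ) (hab : a ≤ b)
    (G : ℕ → Set UnitAddCircle) (hG : ∀ n, G n ∈ residual UnitAddCircle)
    (φ : ℕ → UnitAddCircle → ℝ)
    (hφc : ∀ n, ContinuousOn (φ n) (G n)) (hφI : ∀ n, ∀ θ ∈ G n, φ n θ ∈ Icc a b)
    (G0 : Set UnitAddCircle) (hG0 : G0 ∈ residual UnitAddCircle)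
    (ψ : UnitAddCircle → ℝ) (hψc : ContinuousOn ψ G0) (hψI : ∀ θ ∈ G0, ψ θ ∈ Icc a b)
    (hconv : Tendsto (fun n => sSup ((fun θ => |φ n θ - ψ θ|) '' (G n ∩ G0)))
      atTop (nhds 0)) :
    Tendsto (fun n => hausdorffDist (closure (graphOn (G n) (φ n)))
        (closure (graphOn G0 ψ))) atTop (nhds 0) :=
  statement19_general a b G hG φ hφc hφI G0 hG0 ψ hψc hψI hconv
end
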